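/- arXiv:math/9802054 — 4 statements merged into one kernel-verified Lean document; each statement's English description precedes it below -/
import Mathlib

section
/- Let F be a field, n ≥ 1, λ : Fin n → F with λ_i ≠ 0 for all i, x ∈ F with x ≠ 0 and λ_i ≠ x·λ_j for all i, j, and c : Fin n → F. Let B be the n×n matrix with entries B_{ij} = c_i c_j (1−x) λ_j / (λ_i − x λ_j). Then det B = x^{n(n−1)/2} · (∏_i c_i²) · ∏_{i ≠ j} (λ_i − λ_j)/(x λ_i − λ_j), where the last product is over all ordered pairs (i,j) with i ≠ j. -/
open Matrix BigOperators Finset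

private theorem det_col_const {R : Type*} [CommRing R] {m : Type*} [DecidableEq m] [Fintype m]
    {A B : Matrix m m R} (c : m → R) (k : m) (hk : c k = 0)
    (h : ∀ i j, A i j = B i j + c j * B i k) : det A = det B := by
  rw [← det_transpose A, ← det_transpose B]
  exact det_eq_of_forall_row_eq_smul_add_const c k hk fun i j => h j i

theorem det_cauchy {F : Type*} [Field F] :
    ∀ {n : ℕ} (a b : Fin n → F), (∀ i j, a i - b j ≠ 0) →
      (Matrix.of fun i j => (a i - b j)⁻¹).det
        = (∏ i, ∏ j ∈ Ioi i, ((a j - a i) * (b i - b j))) / ∏ i, ∏ j, (a i - b j) := by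
  intro n
  induction n with
  | zero => intro a b _; simp [Matrix.det_fin_zero]
  | succ n ih =>
    intro a b hab
    have hd0 : (∏ j : Fin (n+1), (a 0 - b j)) ≠ 0 :=
      prod_ne_zero_iff.mpr fun j _ => hab 0 j
    have hd1 : (∏ i : Fin n, (a i.succ - b 0)) ≠ 0 :=
      prod_ne_zero_iff.mpr fun i _ => hab i.succ 0
    have hd2 : (∏ i : Fin n, ∏ j : Fin n, (a i.succ - b j.succ)) ≠ 0 :=
      prod_ne_zero_iff.mpr fun i _ => prod_ne_zero_iff.mpr fun j _ => hab i.succ j.succ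
    have hNum : (∏ i : Fin (n+1), ∏ j ∈ Ioi i, ((a j - a i) * (b i - b j)))
        = ((∏ i : Fin n, (a 0 - a i.succ)) * ∏ j : Fin n, (b j.succ - b 0)) *
          (∏ i : Fin n, ∏ j ∈ Ioi i, ((a j.succ - a i.succ) * (b i.succ - b j.succ))) := by
      rw [Fin.prod_univ_succ, Fin.prod_Ioi_zero]
      simp_rw [Fin.prod_Ioi_succ]
      rw [show (∏ j : Fin n, ((a j.succ - a 0) * (b 0 - b j.succ)))
          = ∏ j : Fin n, ((a 0 - a j.succ) * (b j.succ - b 0)) from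
        Finset.prod_congr rfl fun j _ => by ring]
      rw [Finset.prod_mul_distrib]
    have hDen : (∏ i : Fin (n+1), ∏ j : Fin (n+1), (a i - b j))
        = (∏ j : Fin (n+1), (a 0 - b j)) *
          ((∏ i : Fin n, (a i.succ - b 0)) * ∏ i : Fin n, ∏ j : Fin n, (a i.succ - b j.succ)) := by
      rw [Fin.prod_univ_succ]
      congr 1
      rw [show (∏ i : Fin n, ∏ j : Fin (n+1), (a i.succ - b j))
          = ∏ i : Fin n, ((a i.succ - b 0) * ∏ j : Fin n, (a i.succ - b j.succ)) from
        Finset.prod_congr rfl fun i _ => by rw [Fin.prod_univ_succ]]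
      rw [Finset.prod_mul_distrib]
    calc
      (Matrix.of fun i j : Fin (n+1) => (a i - b j)⁻¹).det
          = (Matrix.of fun i j : Fin (n+1) =>
              Matrix.vecCons ((a 0 - b j)⁻¹)
                (fun i => (a i.succ - b j)⁻¹ - (a 0 - b j)⁻¹) i).det := by
        refine det_eq_of_forall_row_eq_smul_add_const (Matrix.vecCons 0 1) 0 (by simp) ?_
        intro i j
        refine Fin.cases ?_ (fun i => ?_) i
        · simp
        · simp only [Matrix.of_apply, Matrix.cons_val_succ, Matrix.cons_val_zero, Pi.one_apply]
          ring
      _ = (Matrix.of fun i j : Fin (n+1) =>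
              Matrix.vecCons (1:F) (fun i => a 0 - a i.succ) i *
                ((a 0 - b j)⁻¹ *
                  Matrix.vecCons (1:F) (fun i => (a i.succ - b j)⁻¹) i)).det := by
        congr 1
        ext i j
        refine Fin.cases ?_ (fun i => ?_) i
        · simp
        · simp only [Matrix.of_apply, Matrix.cons_val_succ]
          rw [inv_sub_inv (hab i.succ j) (hab 0 j), div_eq_mul_inv, mul_inv]
          ring
      _ = (∏ i : Fin (n+1), Matrix.vecCons (1:F) (fun i => a 0 - a i.succ) i) *
            (Matrix.of fun i j : Fin (n+1) =>
              (a 0 - b j)⁻¹ *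
                Matrix.vecCons (1:F) (fun i => (a i.succ - b j)⁻¹) i).det :=
        det_mul_column _ _
      _ = (∏ i : Fin (n+1), Matrix.vecCons (1:F) (fun i => a 0 - a i.succ) i) *
            ((∏ j : Fin (n+1), (a 0 - b j)⁻¹) *
              (Matrix.of fun i j : Fin (n+1) =>
                Matrix.vecCons (1:F) (fun i => (a i.succ - b j)⁻¹) i).det) := by
        congr 1
        exact det_mul_row (fun j => (a 0 - b j)⁻¹)
          (Matrix.of fun i j : Fin (n+1) =>
            Matrix.vecCons (1:F) (fun i => (a i.succ - b j)⁻¹) i)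
      _ = (∏ i : Fin (n+1), Matrix.vecCons (1:F) (fun i => a 0 - a i.succ) i) *
            ((∏ j : Fin (n+1), (a 0 - b j)⁻¹) *
              (Matrix.of fun i (j : Fin (n+1)) =>
                Matrix.vecCons
                  (Matrix.vecCons (1:F) (fun i => (a i.succ - b 0)⁻¹) i)
                  (fun j => Matrix.vecCons (0:F)
                    (fun i => (a i.succ - b j.succ)⁻¹ - (a i.succ - b 0)⁻¹) i) j).det) := by
        congr 2
        refine det_col_const (Matrix.vecCons 0 1) 0 (by simp) ?_
        intro i j
        refine Fin.cases ?_ (fun j => ?_) j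
        · simp
        · refine Fin.cases ?_ (fun i => ?_) i
          · simp
          · simp only [Matrix.of_apply, Matrix.cons_val_succ, Matrix.cons_val_zero, Pi.one_apply]
            ring
      _ = (∏ i : Fin (n+1), Matrix.vecCons (1:F) (fun i => a 0 - a i.succ) i) *
            ((∏ j : Fin (n+1), (a 0 - b j)⁻¹) *
              (Matrix.of fun i j : Fin n =>
                (a i.succ - b j.succ)⁻¹ - (a i.succ - b 0)⁻¹).det) := by
        congr 2
        rw [det_succ_row_zero]
        simp_rw [Fin.sum_univ_succ]
        simp [Matrix.submatrix, Fin.succAbove_zero]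
      _ = (∏ i : Fin (n+1), Matrix.vecCons (1:F) (fun i => a 0 - a i.succ) i) *
            ((∏ j : Fin (n+1), (a 0 - b j)⁻¹) *
              (Matrix.of fun i j : Fin n =>
                (a i.succ - b 0)⁻¹ *
                  ((b j.succ - b 0) * (a i.succ - b j.succ)⁻¹)).det) := by
        congr 3
        ext i j
        simp only [Matrix.of_apply]
        rw [inv_sub_inv (hab i.succ j.succ) (hab i.succ 0), div_eq_mul_inv, mul_inv]
        ring
      _ = (∏ i : Fin (n+1), Matrix.vecCons (1:F) (fun i => a 0 - a i.succ) i) *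
            ((∏ j : Fin (n+1), (a 0 - b j)⁻¹) *
              ((∏ i : Fin n, (a i.succ - b 0)⁻¹) *
                ((∏ j : Fin n, (b j.succ - b 0)) *
                  (Matrix.of fun i j : Fin n => (a i.succ - b j.succ)⁻¹).det))) := by
        congr 2
        refine (det_mul_column (fun i => (a i.succ - b 0)⁻¹)
          (Matrix.of fun i j : Fin n => (b j.succ - b 0) * (a i.succ - b j.succ)⁻¹)).trans ?_
        congr 1
        exact det_mul_row (fun j => (b j.succ - b 0))
          (Matrix.of fun i j : Fin n => (a i.succ - b j.succ)⁻¹)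
      _ = (∏ i, ∏ j ∈ Ioi i, ((a j - a i) * (b i - b j))) /
            ∏ i : Fin (n+1), ∏ j, (a i - b j) := by
        rw [ih (fun i => a i.succ) (fun j => b j.succ) (fun i j => hab i.succ j.succ)]
        rw [hNum, hDen, Fin.prod_univ_succ (fun i => Matrix.vecCons (1:F) (fun i => a 0 - a i.succ) i)]
        simp only [Matrix.cons_val_zero, Matrix.cons_val_succ, one_mul]
        simp only [prod_inv_distrib]
        field_simp

private theorem offdiag_pairs {F : Type*} [CommMonoid F] {n : ℕ} (f : Fin n → Fin n → F) :
    (∏ i, ∏ j ∈ Ioi i, (f i j * f j i)) = ∏ i, ∏ j ∈ Finset.univ.erase i, f i j := by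
  have h := Finset.prod_prod_Ioi_mul_eq_prod_prod_off_diag (fun a b : Fin n => f b a)
  simp only [Finset.compl_singleton] at h
  convert h using 2 with i

private theorem offdiag_swap {F : Type*} [CommMonoid F] {n : ℕ} (f : Fin n → Fin n → F) :
    (∏ i, ∏ j ∈ Finset.univ.erase i, f i j) = ∏ i, ∏ j ∈ Finset.univ.erase i, f j i := by
  rw [← offdiag_pairs f, ← offdiag_pairs (fun a b => f b a)]
  exact Finset.prod_congr rfl fun i _ => Finset.prod_congr rfl fun j _ => mul_comm _ _

private theorem split_Ioi {F : Type*} [CommMonoid F] {n : ℕ} (u v : Fin n → Fin n → F) :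
    (∏ i, ∏ j ∈ Ioi i, (u i j * v i j))
      = (∏ i, ∏ j ∈ Ioi i, u i j) * ∏ i, ∏ j ∈ Ioi i, v i j := by
  rw [← Finset.prod_mul_distrib]
  exact Finset.prod_congr rfl fun i _ => Finset.prod_mul_distrib

/-- Determinant formula for the Ruijsenaars-type matrix
`B i j = c i * c j * (1 - x) * λ j / (λ i - x * λ j)`:
`det B = x^(n(n-1)/2) * ∏ i, (c i)² * ∏_{i ≠ j} (λ i - λ j) / (x * λ i - λ j)`. -/
theorem det_ruijsenaars_matrix (F : Type*) [Field F] (n : ℕ) (hn : 1 ≤ n)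
    (l : Fin n → F) (hl : ∀ i, l i ≠ 0)
    (x : F) (hx : x ≠ 0) (hlx : ∀ i j, l i ≠ x * l j)
    (c : Fin n → F) :
    (Matrix.of fun i j : Fin n => c i * c j * (1 - x) * l j / (l i - x * l j)).det
      = x ^ (n * (n - 1) / 2) * (∏ i, (c i) ^ 2)
        * ∏ i, ∏ j ∈ Finset.univ.erase i, (l i - l j) / (x * l i - l j) := by
  have hab : ∀ i j, l i - x * l j ≠ 0 := fun i j => sub_ne_zero.mpr (hlx i j)
  have hba : ∀ i j, x * l i - l j ≠ 0 := fun i j => sub_ne_zero.mpr (Ne.symm (hlx j i))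
  have hx1 : (1 : F) - x ≠ 0 := by
    intro h
    exact hlx ⟨0, hn⟩ ⟨0, hn⟩ (by rw [← sub_eq_zero.mp h, one_mul])
  have heven : Even ((n - 1) * n) := by
    have h := Nat.even_mul_succ_self (n - 1)
    rwa [Nat.sub_add_cancel hn] at h
  -- step 1: pull out scalar factors and apply the Cauchy determinant
  have step1 : (Matrix.of fun i j : Fin n => c i * c j * (1 - x) * l j / (l i - x * l j)).det
      = (∏ i, c i) * ((∏ j, (c j * ((1 - x) * l j))) *
          (Matrix.of fun i j : Fin n => (l i - x * l j)⁻¹).det) := by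
    rw [show (Matrix.of fun i j : Fin n => c i * c j * (1 - x) * l j / (l i - x * l j))
        = Matrix.of fun i j : Fin n =>
            c i * ((c j * ((1 - x) * l j)) * (l i - x * l j)⁻¹) from by
      ext i j; simp only [Matrix.of_apply]; rw [div_eq_mul_inv]; ring]
    refine (det_mul_column c _).trans ?_
    congr 1
    exact det_mul_row (fun j => c j * ((1 - x) * l j))
      (Matrix.of fun i j : Fin n => (l i - x * l j)⁻¹)
  rw [step1, det_cauchy l (fun j => x * l j) hab]
  -- numerator of the Cauchy formula
  have hNum : (∏ i, ∏ j ∈ Ioi i, ((l j - l i) * (x * l i - x * l j)))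
      = x ^ (n * (n - 1) / 2) * ∏ i, ∏ j ∈ Finset.univ.erase i, (l i - l j) := by
    rw [show (∏ i, ∏ j ∈ Ioi i, ((l j - l i) * (x * l i - x * l j)))
        = ∏ i, ∏ j ∈ Ioi i, (x * ((l i - l j) * (l j - l i))) from
      Finset.prod_congr rfl fun i _ => Finset.prod_congr rfl fun j _ => by ring]
    rw [split_Ioi (fun _ _ => x) (fun i j => (l i - l j) * (l j - l i))]
    rw [offdiag_pairs fun i j => l i - l j]
    congr 1
    simp_rw [Finset.prod_const]
    rw [Finset.prod_pow_eq_pow_sum]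
    congr 1
    simp_rw [Fin.card_Ioi]
    rw [Fin.sum_univ_eq_sum_range (fun i => n - 1 - i) n,
      Finset.sum_range_reflect (fun i => i) n, Finset.sum_range_id]
  -- denominator of the Cauchy formula
  have hDen : (∏ i, ∏ j, (l i - x * l j))
      = (∏ i, ((1 - x) * l i)) * ∏ i, ∏ j ∈ Finset.univ.erase i, (x * l i - l j) := by
    have swap : (∏ i, ∏ j ∈ Finset.univ.erase i, (l i - x * l j))
        = ∏ i, ∏ j ∈ Finset.univ.erase i, (x * l i - l j) := by
      rw [offdiag_swap fun i j => l i - x * l j]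
      calc (∏ i, ∏ j ∈ Finset.univ.erase i, (l j - x * l i))
          = ∏ i, ((-1 : F) ^ (n - 1) * ∏ j ∈ Finset.univ.erase i, (x * l i - l j)) := by
            refine Finset.prod_congr rfl fun i _ => ?_
            rw [show (∏ j ∈ Finset.univ.erase i, (l j - x * l i))
                = ∏ j ∈ Finset.univ.erase i, ((-1 : F) * (x * l i - l j)) from
              Finset.prod_congr rfl fun j _ => by ring]
            rw [Finset.prod_mul_distrib, Finset.prod_const,
              Finset.card_erase_of_mem (Finset.mem_univ i), Finset.card_univ,
              Fintype.card_fin]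
        _ = ((-1 : F) ^ (n - 1)) ^ n *
              ∏ i, ∏ j ∈ Finset.univ.erase i, (x * l i - l j) := by
            rw [Finset.prod_mul_distrib, Finset.prod_const, Finset.card_univ, Fintype.card_fin]
        _ = ∏ i, ∏ j ∈ Finset.univ.erase i, (x * l i - l j) := by
            rw [← pow_mul, Even.neg_one_pow heven, one_mul]
    rw [← swap, ← Finset.prod_mul_distrib]
    refine Finset.prod_congr rfl fun i _ => ?_
    rw [← Finset.mul_prod_erase Finset.univ _ (Finset.mem_univ i)]
    congr 1
    ring
  rw [hNum, hDen]
  -- final scalar computation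
  have hc2 : (∏ i, (c i) ^ 2) = (∏ i, c i) ^ 2 := by rw [Finset.prod_pow]
  have hQ : (∏ i, ∏ j ∈ Finset.univ.erase i, (x * l i - l j)) ≠ 0 :=
    Finset.prod_ne_zero_iff.mpr fun i _ =>
      Finset.prod_ne_zero_iff.mpr fun j _ => hba i j
  have hP : (∏ i, ((1 - x) * l i)) ≠ 0 :=
    Finset.prod_ne_zero_iff.mpr fun i _ => mul_ne_zero hx1 (hl i)
  rw [show (∏ j, (c j * ((1 - x) * l j))) = (∏ j, c j) * ∏ j, ((1 - x) * l j) from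
    Finset.prod_mul_distrib]
  simp_rw [Finset.prod_div_distrib]
  rw [hc2]
  field_simp
end

section
/- Let F be a field, n ≥ 1, λ : Fin n → F with λ_i ≠ 0 for all i and λ_i ≠ λ_j for i ≠ j, x ∈ F with x ≠ 0 and λ_i ≠ x·λ_j for all i, j, and c : Fin n → F with c_i ≠ 0 for all i. Let B be the n×n matrix with entries B_{ij} = c_i c_j (1−x) λ_j / (λ_i − x λ_j). Then B is invertible, tr B = Σ_i c_i², and tr(B⁻¹) = x^{1−n} · Σ_i c_i⁻² · ∏_{k ≠ i} (λ_k − x λ_i)(λ_i − x λ_k) / ((λ_k − λ_i)(λ_i − λ_k)). In particular tr(B + B⁻¹) = Σ_i ( q_i + q_i⁻¹ x^{1−n} ∏_{k ≠ i} (λ_k − xλ_i)(λ_i − xλ_k)/((λ_k − λ_i)(λ_i − λ_k)) ) with q_i := c_i². -/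
open Matrix BigOperators Finset


private lemma ruij_entry_aux {F : Type*} [Field F] (ci cj ck e lj d P g A1 A2 A3 A4 : F)
    (hcj : cj ≠ 0) (hck : ck ≠ 0) (he : e ≠ 0) (hlj : lj ≠ 0) (hd : d ≠ 0)
    (hg : g ≠ 0) (hA1 : A1 ≠ 0) (hA3 : A3 ≠ 0) (hA4 : A4 ≠ 0) :
    (ci * cj * e * lj / d) * (P * (g * A2) / (e * cj * lj * ck * (A4 * g * A1)))
    = (ci * P / (ck * A4 * (d * A3))) * (A2 * (A3 / A1)) := by
  rw [div_mul_div_comm]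
  conv_rhs => rw [mul_div_assoc']
  rw [div_mul_div_comm,
    div_eq_div_iff (by simp_all [mul_ne_zero]) (by simp_all [mul_ne_zero])]
  ring

private lemma ruij_diag_aux {F : Type*} [Field F] (e li ci X E G H d2 : F)
    (he : e ≠ 0) (hli : li ≠ 0) (hci : ci ≠ 0) (hX : X ≠ 0) (hE : E ≠ 0)
    (hH : H ≠ 0) (hd2 : d2 ≠ 0) :
    (e * li * E) * (d2 * G) / (e * ci * li * ci * (H * d2 * (X * H)))
    = X⁻¹ * ((ci ^ 2)⁻¹ * (G * E / (H * H))) := by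
  rw [inv_eq_one_div, inv_eq_one_div, div_mul_div_comm, div_mul_div_comm,
    div_eq_div_iff (by simp_all [mul_ne_zero]) (by simp_all [mul_ne_zero, pow_ne_zero])]
  ring


/-- For the Ruijsenaars matrix `B i j = c i * c j * (1 - x) * λ j / (λ i - x * λ j)`
(with distinct nonzero `λ i`, `x ≠ 0`, `λ i ≠ x λ j`, and nonzero `c i`): `B` is invertible,
`tr B = ∑ c i²`, and
`tr B⁻¹ = x^(1-n) ∑ i, c i⁻² ∏_{k ≠ i} (λ k - x λ i)(λ i - x λ k)/((λ k - λ i)(λ i - λ k))`;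
in particular `tr (B + B⁻¹)` is the trigonometric Ruijsenaars Hamiltonian in `λ i`, `q i = c i²`. -/
theorem ruijsenaars_matrix_trace_inv (F : Type*) [Field F] (n : ℕ) (hn : 1 ≤ n)
    (l : Fin n → F) (hl : ∀ i, l i ≠ 0) (hl' : ∀ i j, i ≠ j → l i ≠ l j)
    (x : F) (hx : x ≠ 0) (hlx : ∀ i j, l i ≠ x * l j)
    (c : Fin n → F) (hc : ∀ i, c i ≠ 0)
    (B : Matrix (Fin n) (Fin n) F)
    (hB : B = Matrix.of fun i j : Fin n => c i * c j * (1 - x) * l j / (l i - x * l j)) :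
    IsUnit B.det
    ∧ B.trace = ∑ i, (c i) ^ 2
    ∧ B⁻¹.trace = x ^ (1 - (n : ℤ)) * ∑ i, (c i ^ 2)⁻¹ *
        ∏ m ∈ Finset.univ.erase i,
          ((l m - x * l i) * (l i - x * l m)) / ((l m - l i) * (l i - l m))
    ∧ (B + B⁻¹).trace = ∑ i, ((c i) ^ 2 + (c i ^ 2)⁻¹ * x ^ (1 - (n : ℤ)) *
        ∏ m ∈ Finset.univ.erase i,
          ((l m - x * l i) * (l i - x * l m)) / ((l m - l i) * (l i - l m))) := by
  classical
  -- basic nonvanishing facts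
  have h1x : (1 : F) - x ≠ 0 := by
    intro h
    exact hlx ⟨0, hn⟩ ⟨0, hn⟩ (by rw [← sub_eq_zero.mp h, one_mul])
  have hd2 : ∀ i j : Fin n, l i - x * l j ≠ 0 := fun i j => sub_ne_zero.mpr (hlx i j)
  have hd3 : ∀ j k : Fin n, x * l j - l k ≠ 0 := fun j k =>
    sub_ne_zero.mpr fun h => hlx k j h.symm
  have hd4 : ∀ i m : Fin n, i ≠ m → l i - l m ≠ 0 := fun i m h =>
    sub_ne_zero.mpr (hl' i m h)
  have hd1 : ∀ j m : Fin n, j ≠ m → x * l j - x * l m ≠ 0 := fun j m h =>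
    sub_ne_zero.mpr fun hh => hl' j m h (mul_left_cancel₀ hx hh)
  have hP : ∀ k : Fin n, (∏ m, (l k - x * l m)) ≠ 0 := fun k =>
    Finset.prod_ne_zero_iff.mpr fun m _ => hd2 k m
  have hA1 : ∀ j : Fin n, (∏ m ∈ univ.erase j, (x * l j - x * l m)) ≠ 0 := fun j =>
    Finset.prod_ne_zero_iff.mpr fun m hm => hd1 j m (Ne.symm (mem_erase.mp hm).1)
  have hA3 : ∀ i j : Fin n, (∏ m ∈ univ.erase j, (l i - x * l m)) ≠ 0 := fun i j =>
    Finset.prod_ne_zero_iff.mpr fun m _ => hd2 i m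
  have hA4 : ∀ k : Fin n, (∏ m ∈ univ.erase k, (l k - l m)) ≠ 0 := fun k =>
    Finset.prod_ne_zero_iff.mpr fun m hm => hd4 k m (Ne.symm (mem_erase.mp hm).1)
  -- the candidate inverse matrix
  set M : Matrix (Fin n) (Fin n) F := Matrix.of fun j k : Fin n =>
      (∏ m, (l k - x * l m)) * (∏ m, (x * l j - l m)) /
      ((1 - x) * c j * l j * c k * ((∏ m ∈ univ.erase k, (l k - l m)) * (x * l j - l k) *
        (∏ m ∈ univ.erase j, (x * l j - x * l m)))) with hM
  -- the Lagrange interpolation key identity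
  have key : ∀ i k : Fin n, ∏ m ∈ univ.erase k, (l i - l m) =
      ∑ j, (∏ m ∈ univ.erase k, (x * l j - l m)) *
        ((∏ m ∈ univ.erase j, (l i - x * l m)) / (∏ m ∈ univ.erase j, (x * l j - x * l m))) := by
    intro i k
    have hinj : Set.InjOn (fun j => x * l j) ((univ : Finset (Fin n)) : Set (Fin n)) := by
      intro a _ b _ h
      by_contra hab
      exact hl' a b hab (mul_left_cancel₀ hx h)
    set f : Polynomial F := ∏ m ∈ univ.erase k, (Polynomial.X - Polynomial.C (l m)) with hf
    have h0 : f ≠ 0 := by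
      rw [hf]; exact Finset.prod_ne_zero_iff.mpr fun m _ => Polynomial.X_sub_C_ne_zero (l m)
    have h1 : f.natDegree = n - 1 := by
      rw [hf, Polynomial.natDegree_prod _ _ (fun m _ => Polynomial.X_sub_C_ne_zero (l m))]
      simp [Polynomial.natDegree_X_sub_C, card_erase_of_mem]
    have hdeg : f.degree < (#(univ : Finset (Fin n)) : WithBot ℕ) := by
      rw [Polynomial.degree_eq_natDegree h0, h1]
      simp only [card_univ, Fintype.card_fin]
      rw [Nat.cast_withBot, Nat.cast_withBot, WithBot.coe_lt_coe]
      exact Nat.sub_lt (lt_of_lt_of_le one_pos hn) one_pos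
    have heq := Lagrange.eq_interpolate hinj hdeg
    have hev := congrArg (Polynomial.eval (l i)) heq
    rw [Lagrange.interpolate_apply, Polynomial.eval_finset_sum] at hev
    simp only [Polynomial.eval_mul, Polynomial.eval_C, Lagrange.basis, Polynomial.eval_prod,
      Lagrange.basisDivisor, Polynomial.eval_sub, Polynomial.eval_X, hf] at hev
    simp only [inv_mul_eq_div, Finset.prod_div_distrib] at hev
    exact hev
  -- B * M = 1
  have hBM : B * M = 1 := by
    ext i k
    rw [Matrix.mul_apply, Matrix.one_apply]
    have hstep : ∀ j : Fin n, B i j * M j k =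
        (c i * (∏ m, (l k - x * l m)) /
          (c k * (∏ m ∈ univ.erase k, (l k - l m)) * ∏ m, (l i - x * l m))) *
        ((∏ m ∈ univ.erase k, (x * l j - l m)) *
          ((∏ m ∈ univ.erase j, (l i - x * l m)) / (∏ m ∈ univ.erase j, (x * l j - x * l m)))) := by
      intro j
      rw [hB, hM]
      simp only [Matrix.of_apply]
      rw [show (∏ m, (x * l j - l m)) =
            (x * l j - l k) * ∏ m ∈ univ.erase k, (x * l j - l m) from
          (Finset.mul_prod_erase _ _ (mem_univ k)).symm,
        show (∏ m, (l i - x * l m)) =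
            (l i - x * l j) * ∏ m ∈ univ.erase j, (l i - x * l m) from
          (Finset.mul_prod_erase _ _ (mem_univ j)).symm]
      exact ruij_entry_aux (c i) (c j) (c k) (1 - x) (l j) (l i - x * l j)
        (∏ m, (l k - x * l m)) (x * l j - l k)
        (∏ m ∈ univ.erase j, (x * l j - x * l m)) (∏ m ∈ univ.erase k, (x * l j - l m))
        (∏ m ∈ univ.erase j, (l i - x * l m)) (∏ m ∈ univ.erase k, (l k - l m))
        (hc j) (hc k) h1x (hl j) (hd2 i j) (hd3 j k) (hA1 j) (hA3 i j) (hA4 k)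
    rw [Finset.sum_congr rfl fun j _ => hstep j, ← Finset.mul_sum, ← key i k]
    by_cases hik : i = k
    · subst hik
      rw [if_pos rfl, div_mul_eq_mul_div, div_eq_one_iff_eq
        (mul_ne_zero (mul_ne_zero (hc i) (hA4 i)) (hP i))]
      ring
    · rw [if_neg hik]
      have hz0 : (∏ m ∈ univ.erase k, (l i - l m)) = 0 :=
        Finset.prod_eq_zero (mem_erase.mpr ⟨hik, mem_univ i⟩) (sub_self (l i))
      rw [hz0, mul_zero]
  have hdet : IsUnit B.det := Matrix.isUnit_det_of_right_inverse hBM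
  have hBinv : B⁻¹ = M := Matrix.inv_eq_right_inv hBM
  -- trace of B
  have htrB : B.trace = ∑ i, (c i) ^ 2 := by
    rw [Matrix.trace]
    refine Finset.sum_congr rfl fun i _ => ?_
    rw [Matrix.diag_apply, hB]
    simp only [Matrix.of_apply]
    rw [show l i - x * l i = (1 - x) * l i from by ring,
      div_eq_iff (mul_ne_zero h1x (hl i))]
    ring
  -- trace of B⁻¹
  have hz : x ^ (1 - (n : ℤ)) = (x ^ (n - 1 : ℕ))⁻¹ := by
    rw [show (1 - (n : ℤ)) = -((n - 1 : ℕ) : ℤ) from by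
        rw [Nat.cast_sub hn]; push_cast; ring,
      _root_.zpow_neg, zpow_natCast]
  have hXn : (x : F) ^ (n - 1 : ℕ) ≠ 0 := pow_ne_zero _ hx
  have htrM : M.trace = x ^ (1 - (n : ℤ)) * ∑ i, (c i ^ 2)⁻¹ *
      ∏ m ∈ Finset.univ.erase i,
        ((l m - x * l i) * (l i - x * l m)) / ((l m - l i) * (l i - l m)) := by
    rw [Matrix.trace, Finset.mul_sum]
    refine Finset.sum_congr rfl fun i _ => ?_
    rw [Matrix.diag_apply, hM]
    simp only [Matrix.of_apply]
    have hprod : (∏ m ∈ univ.erase i,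
          ((l m - x * l i) * (l i - x * l m)) / ((l m - l i) * (l i - l m)))
        = (∏ m ∈ univ.erase i, (x * l i - l m)) * (∏ m ∈ univ.erase i, (l i - x * l m)) /
          ((∏ m ∈ univ.erase i, (l i - l m)) * (∏ m ∈ univ.erase i, (l i - l m))) := by
      rw [← Finset.prod_mul_distrib, ← Finset.prod_mul_distrib, ← Finset.prod_div_distrib]
      refine Finset.prod_congr rfl fun m _ => ?_
      rw [show (l m - x * l i) * (l i - x * l m) = -((x * l i - l m) * (l i - x * l m)) from
          by ring,
        show (l m - l i) * (l i - l m) = -((l i - l m) * (l i - l m)) from by ring,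
        neg_div_neg_eq]
    rw [hprod, hz]
    rw [show (∏ m, (l i - x * l m)) =
          (l i - x * l i) * ∏ m ∈ univ.erase i, (l i - x * l m) from
        (Finset.mul_prod_erase _ _ (mem_univ i)).symm,
      show (∏ m, (x * l i - l m)) =
          (x * l i - l i) * ∏ m ∈ univ.erase i, (x * l i - l m) from
        (Finset.mul_prod_erase _ _ (mem_univ i)).symm,
      show (∏ m ∈ univ.erase i, (x * l i - x * l m)) =
          x ^ (n - 1 : ℕ) * ∏ m ∈ univ.erase i, (l i - l m) from by
        rw [Finset.prod_congr rfl fun m _ => show x * l i - x * l m = x * (l i - l m) from by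
            ring,
          Finset.prod_mul_distrib, Finset.prod_const, card_erase_of_mem (mem_univ i),
          card_univ, Fintype.card_fin],
      show l i - x * l i = (1 - x) * l i from by ring]
    exact ruij_diag_aux (1 - x) (l i) (c i) (x ^ (n - 1 : ℕ))
      (∏ m ∈ univ.erase i, (l i - x * l m)) (∏ m ∈ univ.erase i, (x * l i - l m))
      (∏ m ∈ univ.erase i, (l i - l m)) (x * l i - l i)
      h1x (hl i) (hc i) hXn (hA3 i i) (hA4 i) (hd3 i i)
  refine ⟨hdet, htrB, by rw [hBinv]; exact htrM, ?_⟩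
  rw [Matrix.trace_add, htrB, hBinv, htrM, Finset.mul_sum, ← Finset.sum_add_distrib]
  exact Finset.sum_congr rfl fun i _ => by ring
end

section
/- Let R be a commutative ℂ-algebra, D a bracket on R, and A ∈ M_k(R) a matrix satisfying the reflection-equation bracket relation for the standard classical r-matrix r of gl_k: {A ⊗, A} = r_a(A⊗A) + (A⊗A)r_a + (1⊗A)r₂₁(A⊗1) − (A⊗1)r(1⊗A), where r_a = (1/2)(r − r₂₁) and 1 is the k×k identity matrix. Then for every n ≥ 1 and all indices i, j, D(tr(Aⁿ), A_{ij}) = 0; in particular D(tr(Aⁿ), tr(Aᵐ)) = 0 for all n, m, i.e. the functions tr(Aⁿ) are Casimir functions of the reflection-equation bracket. -/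
open Matrix Kronecker BigOperators

/-- The standard classical r-matrix of `gl k` over `ℂ`. -/
noncomputable def rStd (k : ℕ) : Matrix (Fin k × Fin k) (Fin k × Fin k) ℂ :=
  (∑ i : Fin k, ∑ j : Fin k, if i < j then
      (Matrix.single i j (1 : ℂ)) ⊗ₖ (Matrix.single j i (1 : ℂ)) else 0)
    + (1 / 2 : ℂ) • ∑ i : Fin k, (Matrix.single i i (1 : ℂ)) ⊗ₖ (Matrix.single i i (1 : ℂ))

/-- The flip `s₂₁` of a `k² × k²` matrix: `(s₂₁)_{(i,p),(j,q)} = s_{(p,i),(q,j)}`. -/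
def flip21 {k : ℕ} {R : Type*} (s : Matrix (Fin k × Fin k) (Fin k × Fin k) R) :
    Matrix (Fin k × Fin k) (Fin k × Fin k) R :=
  Matrix.of fun a b => s (a.2, a.1) (b.2, b.1)

/-- A bracket on a commutative `ℂ`-algebra `R`: an antisymmetric `ℂ`-bilinear map
`D : R × R → R` that is a derivation in each argument. -/
structure IsBracket (R : Type*) [CommRing R] [Algebra ℂ R] (D : R → R → R) : Prop where
  add_left : ∀ f g h : R, D (f + g) h = D f h + D g h
  smul_left : ∀ (a : ℂ) (f h : R), D (a • f) h = a • D f h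
  antisymm : ∀ f g : R, D f g = -D g f
  leibniz : ∀ f g h : R, D (f * g) h = f * D g h + g * D f h

/-- The bracket matrix `{X ⊗, Y}` with entries `{X ⊗, Y}_{(i,p),(j,q)} = D (X i j) (Y p q)`. -/
def bmat {R : Type*} [CommRing R] {k : ℕ} (D : R → R → R)
    (X Y : Matrix (Fin k) (Fin k) R) : Matrix (Fin k × Fin k) (Fin k × Fin k) R :=
  Matrix.of fun a b => D (X a.1 b.1) (Y a.2 b.2)

set_option linter.unusedSectionVars false

noncomputable def Fc {k : ℕ} (a c : Fin k) : ℂ := if a < c then 1 else if a = c then 1/2 else 0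
noncomputable def Gc {k : ℕ} (a c : Fin k) : ℂ := (1/2) * (Fc a c - Fc c a)

lemma rStd_apply {k : ℕ} (a b c d : Fin k) :
    rStd k (a,b) (c,d) = if b = c ∧ a = d then Fc a c else 0 := by
  simp only [rStd, Matrix.add_apply, Matrix.smul_apply, Matrix.sum_apply,
    kroneckerMap_apply, Matrix.single, Matrix.of_apply, smul_eq_mul,
    apply_ite (fun M : Matrix (Fin k × Fin k) (Fin k × Fin k) ℂ => M (a,b) (c,d)),
    Matrix.zero_apply]
  have h1 : (∑ x : Fin k, ∑ y : Fin k,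
      (if x < y then (if x = a ∧ y = c then (1:ℂ) else 0) * (if y = b ∧ x = d then 1 else 0)
        else (0:ℂ)))
      = if a < c then (if c = b ∧ a = d then 1 else 0) else 0 := by
    rw [Finset.sum_eq_single a _ (by simp)]
    · rw [Finset.sum_eq_single c _ (by simp)]
      · by_cases h : a < c <;> simp [h]
      · intro y _ hy; simp [hy]
    · intro x _ hx; simp [hx]
  have h2 : (∑ x : Fin k, (if x = a ∧ x = c then (1:ℂ) else 0) * (if x = b ∧ x = d then (1:ℂ) else 0))
      = if a = c then (if a = b ∧ a = d then (1:ℂ) else 0) else 0 := by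
    rw [Finset.sum_eq_single a _ (by simp)]
    · by_cases h : a = c <;> simp [h]
    · intro x _ hx; simp [hx]
  rw [h1, h2]
  clear h1 h2
  unfold Fc
  rcases lt_trichotomy a c with h|h|h
  · simp [h, ne_of_lt h, eq_comm, and_comm]
  · subst h
    simp [lt_irrefl, eq_comm, and_comm, mul_ite]
  · simp [not_lt_of_gt h, ne_of_gt h, eq_comm, and_comm]

lemma coeff1 {k : ℕ} (m p : Fin k) : Gc m p - Fc m p = -(1/2 : ℂ) := by
  unfold Gc Fc
  rcases lt_trichotomy m p with h|h|h
  · norm_num [h, asymm h, ne_of_lt h, (ne_of_lt h).symm]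
  · subst h; norm_num [lt_irrefl]
  · norm_num [h, asymm h, ne_of_gt h, (ne_of_gt h).symm]

lemma coeff2 {k : ℕ} (q m : Fin k) : Gc q m + Fc m q = (1/2 : ℂ) := by
  unfold Gc Fc
  rcases lt_trichotomy m q with h|h|h
  · norm_num [h, asymm h, ne_of_lt h, (ne_of_lt h).symm]
  · subst h; norm_num [lt_irrefl]
  · norm_num [h, asymm h, ne_of_gt h, (ne_of_gt h).symm]

section Rlevel
variable {k : ℕ} {R : Type*} [CommRing R] [Algebra ℂ R]

lemma rR_apply (a b c d : Fin k) :
    ((rStd k).map (algebraMap ℂ R)) (a,b) (c,d)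
      = if b = c ∧ a = d then algebraMap ℂ R (Fc a c) else 0 := by
  rw [Matrix.map_apply, rStd_apply, apply_ite (algebraMap ℂ R), map_zero]

lemma raR_apply (a b c d : Fin k) :
    (((1/2:ℂ) • (rStd k - flip21 (rStd k))).map (algebraMap ℂ R)) (a,b) (c,d)
      = if b = c ∧ a = d then algebraMap ℂ R (Gc a c) else 0 := by
  rw [Matrix.map_apply]
  have : ((1/2:ℂ) • (rStd k - flip21 (rStd k))) (a,b) (c,d)
      = if b = c ∧ a = d then Gc a c else 0 := by
    simp only [Matrix.smul_apply, Matrix.sub_apply, smul_eq_mul]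
    have hf : flip21 (rStd k) (a,b) (c,d) = rStd k (b,a) (d,c) := rfl
    rw [hf, rStd_apply, rStd_apply]
    by_cases h1 : b = c
    · by_cases h2 : a = d
      · subst h1; subst h2; simp [Gc]
      · simp [h1, h2]
    · simp [h1]
  rw [this, apply_ite (algebraMap ℂ R), map_zero]

lemma flipR_apply (r' : Matrix (Fin k × Fin k) (Fin k × Fin k) R) (a b c d : Fin k) :
    flip21 r' (a,b) (c,d) = r' (b,a) (d,c) := rfl

variable (A : Matrix (Fin k) (Fin k) R)

lemma T1_apply (s p t q : Fin k) :
    ((((1/2:ℂ) • (rStd k - flip21 (rStd k))).map (algebraMap ℂ R)) * (A ⊗ₖ A)) (s,p) (t,q)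
      = algebraMap ℂ R (Gc s p) * (A p t * A s q) := by
  rw [Matrix.mul_apply, Fintype.sum_prod_type]
  simp only [raR_apply, kroneckerMap_apply, ite_mul, zero_mul, ite_and,
    Finset.sum_ite_eq, Finset.sum_ite_eq', Finset.mem_univ, if_true,
    Finset.sum_ite_irrel, Finset.sum_const_zero]

lemma T2_apply (s p t q : Fin k) :
    ((A ⊗ₖ A) * (((1/2:ℂ) • (rStd k - flip21 (rStd k))).map (algebraMap ℂ R))) (s,p) (t,q)
      = A s q * A p t * algebraMap ℂ R (Gc q t) := by
  rw [Matrix.mul_apply, Fintype.sum_prod_type]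
  simp only [raR_apply, kroneckerMap_apply, mul_ite, mul_zero, ite_and,
    Finset.sum_ite_eq, Finset.sum_ite_eq', Finset.mem_univ, if_true,
    Finset.sum_ite_irrel, Finset.sum_const_zero]

lemma T3_apply (s p t q : Fin k) :
    (((1 : Matrix (Fin k) (Fin k) R) ⊗ₖ A) * flip21 ((rStd k).map (algebraMap ℂ R))
        * (A ⊗ₖ (1 : Matrix (Fin k) (Fin k) R))) (s,p) (t,q)
      = if s = q then ∑ u, algebraMap ℂ R (Fc u s) * (A p u * A u t) else 0 := by
  rw [Matrix.mul_apply, Fintype.sum_prod_type]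
  simp only [Matrix.mul_apply, Fintype.sum_prod_type, flipR_apply, rR_apply,
    kroneckerMap_apply, Matrix.one_apply, ite_mul, mul_ite, zero_mul, mul_zero,
    ite_and, Finset.sum_ite_eq, Finset.sum_ite_eq', Finset.mem_univ, if_true,
    one_mul, mul_one, Finset.sum_ite_irrel, Finset.sum_const_zero]
  by_cases h : s = q
  · subst h
    simp only [if_true, if_pos rfl]
    exact Finset.sum_congr rfl fun u _ => by ring
  · simp [h, Ne.symm h]

lemma T4_apply (s p t q : Fin k) :
    ((A ⊗ₖ (1 : Matrix (Fin k) (Fin k) R)) * ((rStd k).map (algebraMap ℂ R))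
        * ((1 : Matrix (Fin k) (Fin k) R) ⊗ₖ A)) (s,p) (t,q)
      = if p = t then ∑ m, algebraMap ℂ R (Fc m p) * (A s m * A m q) else 0 := by
  rw [Matrix.mul_apply, Fintype.sum_prod_type]
  simp only [Matrix.mul_apply, Fintype.sum_prod_type, rR_apply,
    kroneckerMap_apply, Matrix.one_apply, ite_mul, mul_ite, zero_mul, mul_zero,
    ite_and, Finset.sum_ite_eq, Finset.sum_ite_eq', Finset.mem_univ, if_true,
    one_mul, mul_one, Finset.sum_ite_irrel, Finset.sum_const_zero]
  by_cases h : p = t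
  · subst h
    simp only [if_true, if_pos rfl]
    exact Finset.sum_congr rfl fun u _ => by ring
  · simp [h, Ne.symm h]

end Rlevel

section Deriv
variable {R : Type*} [CommRing R] [Algebra ℂ R] {D : R → R → R}

lemma D_zero_left (hD : IsBracket R D) (h : R) : D 0 h = 0 := by
  have := hD.smul_left 0 0 h; simpa using this

lemma D_zero_right (hD : IsBracket R D) (f : R) : D f 0 = 0 := by
  rw [hD.antisymm, D_zero_left hD, neg_zero]

lemma D_one_left (hD : IsBracket R D) (h : R) : D 1 h = 0 := by
  have := hD.leibniz 1 1 h
  simp only [one_mul, mul_one] at this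
  exact (left_eq_add.mp this)

lemma D_one_right (hD : IsBracket R D) (f : R) : D f 1 = 0 := by
  rw [hD.antisymm, D_one_left hD, neg_zero]

lemma D_sum_left (hD : IsBracket R D) {ι : Type*} (s : Finset ι) (f : ι → R) (h : R) :
    D (∑ i ∈ s, f i) h = ∑ i ∈ s, D (f i) h := by
  classical
  induction s using Finset.induction with
  | empty => simp [D_zero_left hD]
  | insert _ _ hx ih => rw [Finset.sum_insert hx, hD.add_left, ih, Finset.sum_insert hx]

lemma D_sum_right (hD : IsBracket R D) {ι : Type*} (s : Finset ι) (f : ι → R) (h : R) :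
    D h (∑ i ∈ s, f i) = ∑ i ∈ s, D h (f i) := by
  rw [hD.antisymm, D_sum_left hD, ← Finset.sum_neg_distrib]
  exact Finset.sum_congr rfl fun i _ => (hD.antisymm _ _).symm

lemma D_mul_right (hD : IsBracket R D) (f g h : R) :
    D f (g * h) = g * D f h + h * D f g := by
  rw [hD.antisymm, hD.leibniz, hD.antisymm g f, hD.antisymm h f]
  ring

/-- Entrywise bracket-derivative of a matrix. -/
def dmat {k : ℕ} (D : R → R → R) (x : R) (M : Matrix (Fin k) (Fin k) R) :
    Matrix (Fin k) (Fin k) R :=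
  Matrix.of fun i j => D (M i j) x

lemma dmat_mul (hD : IsBracket R D) {k : ℕ} (x : R) (M N : Matrix (Fin k) (Fin k) R) :
    dmat D x (M * N) = dmat D x M * N + M * dmat D x N := by
  ext i j
  simp only [dmat, Matrix.of_apply, Matrix.add_apply, Matrix.mul_apply, D_sum_left hD,
    hD.leibniz, Finset.sum_add_distrib]
  rw [add_comm]
  congr 1 <;> exact Finset.sum_congr rfl fun t _ => by ring

lemma dmat_pow (hD : IsBracket R D) {k : ℕ} (x : R) (A : Matrix (Fin k) (Fin k) R) (n : ℕ) :
    dmat D x (A ^ (n+1)) = ∑ m ∈ Finset.range (n+1), A ^ m * dmat D x A * A ^ (n - m) := by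
  induction n with
  | zero => simp [pow_one]
  | succ n ih =>
      rw [pow_succ, dmat_mul hD, ih, Finset.sum_mul,
        Finset.sum_range_succ (f := fun m => A ^ m * dmat D x A * A ^ (n + 1 - m))]
      congr 1
      · refine Finset.sum_congr rfl fun m hm => ?_
        have hm' : m ≤ n := Nat.lt_succ_iff.mp (Finset.mem_range.mp hm)
        rw [mul_assoc, ← pow_succ]
        congr 2
        omega
      · rw [Nat.sub_self, pow_zero, mul_one]

lemma D_trace_dmat (hD : IsBracket R D) {k : ℕ} (x : R) (M : Matrix (Fin k) (Fin k) R) :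
    D M.trace x = (dmat D x M).trace := by
  simp [Matrix.trace, Matrix.diag, D_sum_left hD, dmat]

lemma D_trace_pow (hD : IsBracket R D) {k : ℕ} (x : R) (A : Matrix (Fin k) (Fin k) R) (n : ℕ) :
    D ((A ^ (n+1)).trace) x
      = ∑ m ∈ Finset.range (n+1), ∑ s : Fin k, ∑ t : Fin k, (A ^ n) s t * D (A t s) x := by
  rw [D_trace_dmat hD, dmat_pow hD, Matrix.trace_sum]
  refine Finset.sum_congr rfl fun m hm => ?_
  have hm' : m ≤ n := Nat.lt_succ_iff.mp (Finset.mem_range.mp hm)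
  rw [Matrix.trace_mul_comm, ← mul_assoc, ← pow_add]
  have : n - m + m = n := by omega
  rw [this]
  simp only [Matrix.trace, Matrix.diag, Matrix.mul_apply, dmat, Matrix.of_apply]

end Deriv

lemma key {k : ℕ} {R : Type*} [CommRing R] [Algebra ℂ R] {D : R → R → R}
    (hD : IsBracket R D) (A : Matrix (Fin k) (Fin k) R)
    (hA : bmat D A A
      = (((1 / 2 : ℂ) • (rStd k - flip21 (rStd k))).map (algebraMap ℂ R)) * (A ⊗ₖ A)
        + (A ⊗ₖ A) * (((1 / 2 : ℂ) • (rStd k - flip21 (rStd k))).map (algebraMap ℂ R))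
        + ((1 : Matrix (Fin k) (Fin k) R) ⊗ₖ A) * flip21 ((rStd k).map (algebraMap ℂ R))
            * (A ⊗ₖ (1 : Matrix (Fin k) (Fin k) R))
        - (A ⊗ₖ (1 : Matrix (Fin k) (Fin k) R)) * ((rStd k).map (algebraMap ℂ R))
            * ((1 : Matrix (Fin k) (Fin k) R) ⊗ₖ A))
    (n : ℕ) (p q : Fin k) :
    ∑ s : Fin k, ∑ t : Fin k, (A ^ n) s t * D (A t s) (A p q) = 0 := by
  have hrw : ∀ s t : Fin k, D (A t s) (A p q)
      = algebraMap ℂ R (Gc t p) * (A p s * A t q)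
        + A t q * A p s * algebraMap ℂ R (Gc q s)
        + (if t = q then ∑ u, algebraMap ℂ R (Fc u t) * (A p u * A u s) else 0)
        - (if p = s then ∑ m, algebraMap ℂ R (Fc m p) * (A t m * A m q) else 0) := by
    intro s t
    have hb : D (A t s) (A p q) = (bmat D A A) (t,p) (s,q) := rfl
    rw [hb, hA, Matrix.sub_apply, Matrix.add_apply, Matrix.add_apply,
      T1_apply, T2_apply, T3_apply, T4_apply]
  have expand : ∑ s : Fin k, ∑ t : Fin k, (A ^ n) s t * D (A t s) (A p q)
      = (∑ s : Fin k, ∑ t : Fin k, (A^n) s t * (algebraMap ℂ R (Gc t p) * (A p s * A t q)))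
        + (∑ s : Fin k, ∑ t : Fin k, (A^n) s t * (A t q * A p s * algebraMap ℂ R (Gc q s)))
        + (∑ s : Fin k, ∑ t : Fin k, (A^n) s t
            * (if t = q then ∑ u, algebraMap ℂ R (Fc u t) * (A p u * A u s) else 0))
        - (∑ s : Fin k, ∑ t : Fin k, (A^n) s t
            * (if p = s then ∑ m, algebraMap ℂ R (Fc m p) * (A t m * A m q) else 0)) := by
    simp only [hrw, mul_add, mul_sub, Finset.sum_add_distrib, Finset.sum_sub_distrib]
  rw [expand]
  set C := A ^ (n+1) with hCdef
  have hC1 : A * A ^ n = C := (pow_succ' A n).symm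
  have hC2 : A ^ n * A = C := (pow_succ A n).symm
  have H1 : (∑ s : Fin k, ∑ t : Fin k, (A^n) s t * (algebraMap ℂ R (Gc t p) * (A p s * A t q)))
      = ∑ m : Fin k, algebraMap ℂ R (Gc m p) * (C p m * A m q) := by
    rw [Finset.sum_comm]
    refine Finset.sum_congr rfl fun t _ => ?_
    rw [← hC1, Matrix.mul_apply, Finset.sum_mul, Finset.mul_sum]
    exact Finset.sum_congr rfl fun s _ => by ring
  have H2 : (∑ s : Fin k, ∑ t : Fin k, (A^n) s t * (A t q * A p s * algebraMap ℂ R (Gc q s)))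
      = ∑ m : Fin k, algebraMap ℂ R (Gc q m) * (A p m * C m q) := by
    refine Finset.sum_congr rfl fun s _ => ?_
    rw [← hC2, Matrix.mul_apply, Finset.mul_sum, Finset.mul_sum]
    exact Finset.sum_congr rfl fun t _ => by ring
  have H3 : (∑ s : Fin k, ∑ t : Fin k, (A^n) s t
        * (if t = q then ∑ u, algebraMap ℂ R (Fc u t) * (A p u * A u s) else 0))
      = ∑ u : Fin k, algebraMap ℂ R (Fc u q) * (A p u * C u q) := by
    simp only [mul_ite, mul_zero, Finset.sum_ite_eq', Finset.mem_univ, if_true]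
    simp only [Finset.mul_sum]
    rw [Finset.sum_comm]
    refine Finset.sum_congr rfl fun u _ => ?_
    rw [← hC1, Matrix.mul_apply, Finset.mul_sum, Finset.mul_sum]
    exact Finset.sum_congr rfl fun s _ => by ring
  have H4 : (∑ s : Fin k, ∑ t : Fin k, (A^n) s t
        * (if p = s then ∑ m, algebraMap ℂ R (Fc m p) * (A t m * A m q) else 0))
      = ∑ m : Fin k, algebraMap ℂ R (Fc m p) * (C p m * A m q) := by
    simp only [mul_ite, mul_zero, Finset.sum_ite_irrel, Finset.sum_const_zero,
      Finset.sum_ite_eq, Finset.mem_univ, if_true]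
    simp only [Finset.mul_sum]
    rw [Finset.sum_comm]
    refine Finset.sum_congr rfl fun m _ => ?_
    rw [← hC2, Matrix.mul_apply, Finset.sum_mul, Finset.mul_sum]
    exact Finset.sum_congr rfl fun t _ => by ring
  rw [H1, H2, H3, H4]
  rw [← Finset.sum_add_distrib, ← Finset.sum_add_distrib, ← Finset.sum_sub_distrib]
  have step : ∀ m : Fin k, algebraMap ℂ R (Gc m p) * (C p m * A m q)
      + algebraMap ℂ R (Gc q m) * (A p m * C m q)
      + algebraMap ℂ R (Fc m q) * (A p m * C m q)
      - algebraMap ℂ R (Fc m p) * (C p m * A m q)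
      = algebraMap ℂ R (1/2 : ℂ) * (A p m * C m q)
        - algebraMap ℂ R (1/2 : ℂ) * (C p m * A m q) := by
    intro m
    have e1 : algebraMap ℂ R (Gc m p) - algebraMap ℂ R (Fc m p)
        = - algebraMap ℂ R (1/2 : ℂ) := by rw [← map_sub, coeff1, map_neg]
    have e2 : algebraMap ℂ R (Gc q m) + algebraMap ℂ R (Fc m q)
        = algebraMap ℂ R (1/2 : ℂ) := by rw [← map_add, coeff2]
    linear_combination (C p m * A m q) * e1 + (A p m * C m q) * e2
  rw [Finset.sum_congr rfl fun m _ => step m, Finset.sum_sub_distrib,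
    ← Finset.mul_sum, ← Finset.mul_sum]
  have hcomm : (∑ m : Fin k, A p m * C m q) = ∑ m : Fin k, C p m * A m q := by
    have h : A * C = C * A := by rw [hCdef, ← pow_succ', ← pow_succ]
    calc (∑ m : Fin k, A p m * C m q) = (A * C) p q := (Matrix.mul_apply).symm
      _ = (C * A) p q := by rw [h]
      _ = ∑ m : Fin k, C p m * A m q := Matrix.mul_apply
  rw [hcomm, sub_self]


/-- If a matrix `A` over a commutative `ℂ`-algebra satisfies the reflection-equation bracket
relation for the standard classical r-matrix of `gl k`, then the functions `tr (Aⁿ)` are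
Casimirs: `D (tr Aⁿ) (A i j) = 0`, and in particular `D (tr Aⁿ) (tr Aᵐ) = 0`. -/
theorem reflection_equation_trace_casimir (k : ℕ) (R : Type*) [CommRing R] [Algebra ℂ R]
    (D : R → R → R) (hD : IsBracket R D) (A : Matrix (Fin k) (Fin k) R)
    (r : Matrix (Fin k × Fin k) (Fin k × Fin k) R)
    (hr : r = (rStd k).map (algebraMap ℂ R))
    (ra : Matrix (Fin k × Fin k) (Fin k × Fin k) R)
    (hra : ra = (((1 / 2 : ℂ) • (rStd k - flip21 (rStd k))).map (algebraMap ℂ R)))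
    (hA : bmat D A A
      = ra * (A ⊗ₖ A) + (A ⊗ₖ A) * ra
        + ((1 : Matrix (Fin k) (Fin k) R) ⊗ₖ A) * flip21 r * (A ⊗ₖ (1 : Matrix (Fin k) (Fin k) R))
        - (A ⊗ₖ (1 : Matrix (Fin k) (Fin k) R)) * r * ((1 : Matrix (Fin k) (Fin k) R) ⊗ₖ A)) :
    (∀ n : ℕ, 1 ≤ n → ∀ i j : Fin k, D ((A ^ n).trace) (A i j) = 0)
    ∧ (∀ n m : ℕ, 1 ≤ n → 1 ≤ m → D ((A ^ n).trace) ((A ^ m).trace) = 0) := by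
  subst hr; subst hra
  have part1 : ∀ n : ℕ, 1 ≤ n → ∀ i j : Fin k, D ((A ^ n).trace) (A i j) = 0 := by
    intro n hn i j
    obtain ⟨n', rfl⟩ : ∃ n', n = n' + 1 := ⟨n - 1, by omega⟩
    rw [D_trace_pow hD]
    exact Finset.sum_eq_zero fun m _ => key hD A hA n' i j
  refine ⟨part1, ?_⟩
  intro n m hn _
  have hz : ∀ m' : ℕ, ∀ i j : Fin k, D ((A ^ n).trace) ((A ^ m') i j) = 0 := by
    intro m'
    induction m' with
    | zero =>
        intro i j
        rw [pow_zero]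
        by_cases h : i = j
        · simp [Matrix.one_apply, h, D_one_right hD]
        · simp [Matrix.one_apply, h, D_zero_right hD]
    | succ m' ih =>
        intro i j
        rw [pow_succ, Matrix.mul_apply, D_sum_right hD]
        refine Finset.sum_eq_zero fun t _ => ?_
        rw [D_mul_right hD, ih i t, part1 n hn t j, mul_zero, mul_zero, add_zero]
  have htr : (A ^ m).trace = ∑ i : Fin k, (A ^ m) i i := rfl
  rw [htr, D_sum_right hD]
  exact Finset.sum_eq_zero fun i _ => hz m i i
end

section
/- Let r be a k²×k² complex matrix satisfying the classical Yang–Baxter equation [r₁₂, r₁₃] + [r₁₂, r₂₃] + [r₁₃, r₂₃] = 0 and r + r₂₁ = t (the split Casimir), and set r_a := (1/2)(r − r₂₁). Let R := MvPolynomial (Fin k × Fin k) ℂ be the polynomial algebra in the entries of a k×k matrix A of indeterminates, A_{ij} := X(i,j). Then there exists a bracket D on R satisfying the Jacobi identity D(f, D(g,h)) + D(g, D(h,f)) + D(h, D(f,g)) = 0 for all f, g, h ∈ R, whose values on generators are given by {A ⊗, A} = [r_a, A⊗A]. (This is the Poisson–Lie structure on the group GL_k associated to the one-edge, two-vertex ciliated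 graph.) -/
open Matrix Kronecker BigOperators

/-- `s₁₂ = s ⊗ I` acting on the first two factors of a triple tensor product. -/
def lift12 {k : ℕ} (s : Matrix (Fin k × Fin k) (Fin k × Fin k) ℂ) :
    Matrix (Fin k × Fin k × Fin k) (Fin k × Fin k × Fin k) ℂ :=
  Matrix.of fun a b => s (a.1, a.2.1) (b.1, b.2.1) * (if a.2.2 = b.2.2 then 1 else 0)

/-- `s₂₃ = I ⊗ s` acting on the last two factors of a triple tensor product. -/
def lift23 {k : ℕ} (s : Matrix (Fin k × Fin k) (Fin k × Fin k) ℂ) :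
    Matrix (Fin k × Fin k × Fin k) (Fin k × Fin k × Fin k) ℂ :=
  Matrix.of fun a b => (if a.1 = b.1 then 1 else 0) * s (a.2.1, a.2.2) (b.2.1, b.2.2)

/-- `s₁₃` acting on the first and third factors of a triple tensor product. -/
def lift13 {k : ℕ} (s : Matrix (Fin k × Fin k) (Fin k × Fin k) ℂ) :
    Matrix (Fin k × Fin k × Fin k) (Fin k × Fin k × Fin k) ℂ :=
  Matrix.of fun a b => s (a.1, a.2.2) (b.1, b.2.2) * (if a.2.1 = b.2.1 then 1 else 0)

/-- The split Casimir `t = ∑_{i,j} E i j ⊗ E j i`. -/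
noncomputable def tCas (k : ℕ) : Matrix (Fin k × Fin k) (Fin k × Fin k) ℂ :=
  ∑ i : Fin k, ∑ j : Fin k, (single i j (1 : ℂ)) ⊗ₖ (single j i (1 : ℂ))

open MvPolynomial

variable {k : ℕ}

abbrev σk (k : ℕ) := Fin k × Fin k
abbrev Rk (k : ℕ) := MvPolynomial (σk k) ℂ
abbrev Ik3 (k : ℕ) := Fin k × Fin k × Fin k

/-- generic 12-lift -/
def L12 {S : Type*} [CommRing S] (s : Matrix (σk k) (σk k) S) : Matrix (Ik3 k) (Ik3 k) S :=
  Matrix.of fun a b => s (a.1, a.2.1) (b.1, b.2.1) * (if a.2.2 = b.2.2 then 1 else 0)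

def L23 {S : Type*} [CommRing S] (s : Matrix (σk k) (σk k) S) : Matrix (Ik3 k) (Ik3 k) S :=
  Matrix.of fun a b => (if a.1 = b.1 then 1 else 0) * s (a.2.1, a.2.2) (b.2.1, b.2.2)

def L13 {S : Type*} [CommRing S] (s : Matrix (σk k) (σk k) S) : Matrix (Ik3 k) (Ik3 k) S :=
  Matrix.of fun a b => s (a.1, a.2.2) (b.1, b.2.2) * (if a.2.1 = b.2.1 then 1 else 0)

/-- split Casimir, entrywise, generic -/
def tE (k : ℕ) {S : Type*} [CommRing S] : Matrix (σk k) (σk k) S :=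
  Matrix.of fun x y => (if x.1 = y.2 then 1 else 0) * (if x.2 = y.1 then 1 else 0)

noncomputable def lam (a : Matrix (σk k) (σk k) ℂ) (u v : σk k) : Rk k :=
  ∑ m : Fin k, ∑ n : Fin k,
    (C (a (u.1, v.1) (m, n)) * (X (m, u.2) * X (n, v.2))
      - C (a (m, n) (u.2, v.2)) * (X (u.1, m) * X (v.1, n)))

noncomputable def Dbr (a : Matrix (σk k) (σk k) ℂ) (f g : Rk k) : Rk k :=
  ∑ u : σk k, ∑ v : σk k, lam a u v * pderiv u f * pderiv v g

section DbrLemmas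
variable (a : Matrix (σk k) (σk k) ℂ)

theorem Dbr_add_left (f g h : Rk k) : Dbr a (f + g) h = Dbr a f h + Dbr a g h := by
  simp [Dbr, map_add, add_mul, mul_add, Finset.sum_add_distrib]

theorem Dbr_add_right (f g h : Rk k) : Dbr a f (g + h) = Dbr a f g + Dbr a f h := by
  simp [Dbr, map_add, add_mul, mul_add, Finset.sum_add_distrib]

theorem Dbr_smul_left (c : ℂ) (f h : Rk k) : Dbr a (c • f) h = c • Dbr a f h := by
  simp only [Dbr, Finset.smul_sum, smul_eq_C_mul, pderiv_C_mul]
  refine Finset.sum_congr rfl fun u _ => Finset.sum_congr rfl fun v _ => ?_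
  ring

theorem Dbr_C_mul_right (c : ℂ) (f g : Rk k) : Dbr a f (C c * g) = C c * Dbr a f g := by
  simp only [Dbr, pderiv_C_mul, Finset.mul_sum]
  refine Finset.sum_congr rfl fun u _ => Finset.sum_congr rfl fun v _ => ?_
  ring

theorem Dbr_C_left (c : ℂ) (g : Rk k) : Dbr a (C c) g = 0 := by
  simp [Dbr]

theorem Dbr_C_right (c : ℂ) (g : Rk k) : Dbr a g (C c) = 0 := by
  simp [Dbr]

theorem Dbr_mul_left (f g h : Rk k) : Dbr a (f * g) h = f * Dbr a g h + g * Dbr a f h := by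
  simp only [Dbr, pderiv_mul, Finset.mul_sum]
  rw [← Finset.sum_add_distrib]
  refine Finset.sum_congr rfl fun u _ => ?_
  rw [← Finset.sum_add_distrib]
  refine Finset.sum_congr rfl fun v _ => ?_
  ring

theorem Dbr_mul_right (f g h : Rk k) : Dbr a f (g * h) = g * Dbr a f h + h * Dbr a f g := by
  simp only [Dbr, pderiv_mul, Finset.mul_sum]
  rw [← Finset.sum_add_distrib]
  refine Finset.sum_congr rfl fun u _ => ?_
  rw [← Finset.sum_add_distrib]
  refine Finset.sum_congr rfl fun v _ => ?_
  ring

theorem Dbr_sub_right (f g h : Rk k) : Dbr a f (g - h) = Dbr a f g - Dbr a f h := by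
  simp [Dbr, map_sub, mul_sub, sub_mul, Finset.sum_sub_distrib]

noncomputable def DbrHom (f : Rk k) : Rk k →+ Rk k :=
  AddMonoidHom.mk' (Dbr a f) (Dbr_add_right a f)

theorem Dbr_sum_right {α : Type*} (f : Rk k) (s : Finset α) (g : α → Rk k) :
    Dbr a f (∑ x ∈ s, g x) = ∑ x ∈ s, Dbr a f (g x) :=
  map_sum (DbrHom a f) g s

end DbrLemmas
section Anti
variable (a : Matrix (σk k) (σk k) ℂ)

theorem Dbr_zero_right (f : Rk k) : Dbr a f 0 = 0 := by simp [Dbr]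

theorem lam_antisymm (ha : ∀ x y : σk k, a (x.2, x.1) (y.2, y.1) = -a x y) (u v : σk k) :
    lam a u v = -lam a v u := by
  rw [lam, lam]
  simp only [← Finset.sum_neg_distrib]
  rw [Finset.sum_comm]
  refine Finset.sum_congr rfl fun m _ => Finset.sum_congr rfl fun n _ => ?_
  have h1 := ha (v.1, u.1) (m, n)
  have h2 := ha (m, n) (v.2, u.2)
  simp only at h1 h2
  rw [h1, h2, map_neg, map_neg]
  ring

theorem Dbr_antisymm (ha : ∀ x y : σk k, a (x.2, x.1) (y.2, y.1) = -a x y) (f g : Rk k) :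
    Dbr a f g = -Dbr a g f := by
  rw [Dbr, Dbr]
  simp only [← Finset.sum_neg_distrib]
  rw [Finset.sum_comm]
  refine Finset.sum_congr rfl fun u _ => Finset.sum_congr rfl fun v _ => ?_
  rw [lam_antisymm a ha u v]
  ring

theorem Dbr_X_X (u v : σk k) : Dbr a (X u) (X v) = lam a u v := by
  classical
  simp [Dbr, pderiv_X, Pi.single_apply, mul_ite, ite_mul, mul_one, mul_zero, zero_mul,
    one_mul, Finset.sum_ite_eq, Finset.sum_ite_eq']

end Anti

section Jac
variable (a : Matrix (σk k) (σk k) ℂ)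

noncomputable def Jac (f g h : Rk k) : Rk k :=
  Dbr a f (Dbr a g h) + Dbr a g (Dbr a h f) + Dbr a h (Dbr a f g)

theorem Jac_cyc (f g h : Rk k) : Jac a f g h = Jac a g h f := by
  rw [Jac, Jac]; ring

theorem Jac_add1 (f f' g h : Rk k) :
    Jac a (f + f') g h = Jac a f g h + Jac a f' g h := by
  simp only [Jac, Dbr_add_left, Dbr_add_right]; ring

theorem Jac_C (c : ℂ) (g h : Rk k) : Jac a (C c) g h = 0 := by
  simp [Jac, Dbr_C_left, Dbr_C_right, Dbr_zero_right]

theorem Jac_C2 (c : ℂ) (f h : Rk k) : Jac a f (C c) h = 0 := by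
  rw [Jac_cyc]; exact Jac_C a c h f

theorem Jac_C3 (c : ℂ) (f g : Rk k) : Jac a f g (C c) = 0 := by
  rw [← Jac_cyc a (C c) f g]; exact Jac_C a c f g

theorem Jac_add2 (f g g' h : Rk k) :
    Jac a f (g + g') h = Jac a f g h + Jac a f g' h := by
  rw [Jac_cyc a f (g + g') h, Jac_add1, ← Jac_cyc a f g h, ← Jac_cyc a f g' h]

theorem Jac_add3 (f g h h' : Rk k) :
    Jac a f g (h + h') = Jac a f g h + Jac a f g h' := by
  rw [← Jac_cyc a (h + h') f g, Jac_add1, Jac_cyc a h f g, Jac_cyc a h' f g]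

theorem Jac_mul (ha : ∀ x y : σk k, a (x.2, x.1) (y.2, y.1) = -a x y) (f g h l : Rk k) :
    Jac a (f * g) h l = f * Jac a g h l + g * Jac a f h l := by
  simp only [Jac, Dbr_mul_left, Dbr_mul_right, Dbr_add_right]
  linear_combination (Dbr a l g) * (Dbr_antisymm a ha h f) + (Dbr a l f) * (Dbr_antisymm a ha h g)

theorem Jac_mul2 (ha : ∀ x y : σk k, a (x.2, x.1) (y.2, y.1) = -a x y) (f g g' h : Rk k) :
    Jac a f (g * g') h = g * Jac a f g' h + g' * Jac a f g h := by
  rw [Jac_cyc a f (g * g') h, Jac_mul a ha, ← Jac_cyc a f g' h, ← Jac_cyc a f g h]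

theorem Jac_mul3 (ha : ∀ x y : σk k, a (x.2, x.1) (y.2, y.1) = -a x y) (f g h h' : Rk k) :
    Jac a f g (h * h') = h * Jac a f g h' + h' * Jac a f g h := by
  rw [← Jac_cyc a (h * h') f g, Jac_mul a ha, Jac_cyc a h' f g, Jac_cyc a h f g]

theorem Jac_zero (ha : ∀ x y : σk k, a (x.2, x.1) (y.2, y.1) = -a x y)
    (hgen : ∀ u v w : σk k, Jac a (X u) (X v) (X w) = 0) :
    ∀ f g h : Rk k, Jac a f g h = 0 := by
  have stepA : ∀ (f : Rk k) (v w : σk k), Jac a f (X v) (X w) = 0 := by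
    intro f
    induction f using MvPolynomial.induction_on with
    | C c => intro v w; exact Jac_C a c _ _
    | add p q hp hq => intro v w; rw [Jac_add1, hp, hq, add_zero]
    | mul_X p n hp => intro v w; rw [Jac_mul a ha, hp, hgen, mul_zero, mul_zero, add_zero]
  have stepB : ∀ (f g : Rk k) (w : σk k), Jac a f g (X w) = 0 := by
    intro f g
    induction g using MvPolynomial.induction_on with
    | C c => intro w; rw [Jac_C2]
    | add p q hp hq => intro w; rw [Jac_add2, hp, hq, add_zero]
    | mul_X p n hp => intro w; rw [Jac_mul2 a ha, hp, stepA, mul_zero, mul_zero, add_zero]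
  intro f g h
  induction h using MvPolynomial.induction_on with
  | C c => rw [Jac_C3]
  | add p q hp hq => rw [Jac_add3, hp, hq, add_zero]
  | mul_X p n hp => rw [Jac_mul3 a ha, hp, stepB, mul_zero, mul_zero, add_zero]

end Jac
section EntryLemmas
variable {S : Type*} [CommRing S]

theorem L12_mul (x : Matrix (σk k) (σk k) S) (M : Matrix (Ik3 k) (Ik3 k) S) (A B : Ik3 k) :
    (L12 x * M) A B = ∑ m : Fin k, ∑ n : Fin k, x (A.1, A.2.1) (m, n) * M (m, n, A.2.2) B := by
  rw [Matrix.mul_apply, Fintype.sum_prod_type]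
  refine Finset.sum_congr rfl fun m _ => ?_
  rw [Fintype.sum_prod_type]
  refine Finset.sum_congr rfl fun n _ => ?_
  simp [L12, mul_ite, ite_mul, mul_one, mul_zero, zero_mul, Finset.sum_ite_eq]

theorem mul_L12 (x : Matrix (σk k) (σk k) S) (M : Matrix (Ik3 k) (Ik3 k) S) (A B : Ik3 k) :
    (M * L12 x) A B = ∑ m : Fin k, ∑ n : Fin k, M A (m, n, B.2.2) * x (m, n) (B.1, B.2.1) := by
  rw [Matrix.mul_apply, Fintype.sum_prod_type]
  refine Finset.sum_congr rfl fun m _ => ?_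
  rw [Fintype.sum_prod_type]
  refine Finset.sum_congr rfl fun n _ => ?_
  simp [L12, mul_ite, ite_mul, mul_one, mul_zero, zero_mul, Finset.sum_ite_eq']

theorem L13_mul (x : Matrix (σk k) (σk k) S) (M : Matrix (Ik3 k) (Ik3 k) S) (A B : Ik3 k) :
    (L13 x * M) A B = ∑ m : Fin k, ∑ n : Fin k, x (A.1, A.2.2) (m, n) * M (m, A.2.1, n) B := by
  rw [Matrix.mul_apply, Fintype.sum_prod_type]
  refine Finset.sum_congr rfl fun m _ => ?_
  rw [Fintype.sum_prod_type, Finset.sum_comm]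
  refine Finset.sum_congr rfl fun n _ => ?_
  simp [L13, mul_ite, ite_mul, mul_one, mul_zero, zero_mul, Finset.sum_ite_eq]

theorem mul_L13 (x : Matrix (σk k) (σk k) S) (M : Matrix (Ik3 k) (Ik3 k) S) (A B : Ik3 k) :
    (M * L13 x) A B = ∑ m : Fin k, ∑ n : Fin k, M A (m, B.2.1, n) * x (m, n) (B.1, B.2.2) := by
  rw [Matrix.mul_apply, Fintype.sum_prod_type]
  refine Finset.sum_congr rfl fun m _ => ?_
  rw [Fintype.sum_prod_type, Finset.sum_comm]
  refine Finset.sum_congr rfl fun n _ => ?_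
  simp [L13, mul_ite, ite_mul, mul_one, mul_zero, zero_mul, Finset.sum_ite_eq']

theorem L23_mul (x : Matrix (σk k) (σk k) S) (M : Matrix (Ik3 k) (Ik3 k) S) (A B : Ik3 k) :
    (L23 x * M) A B = ∑ m : Fin k, ∑ n : Fin k, x (A.2.1, A.2.2) (m, n) * M (A.1, m, n) B := by
  rw [Matrix.mul_apply, Fintype.sum_prod_type, Finset.sum_comm, Fintype.sum_prod_type]
  refine Finset.sum_congr rfl fun m _ => ?_
  refine Finset.sum_congr rfl fun n _ => ?_
  simp [L23, mul_ite, ite_mul, mul_one, mul_zero, zero_mul, Finset.sum_ite_eq]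

theorem mul_L23 (x : Matrix (σk k) (σk k) S) (M : Matrix (Ik3 k) (Ik3 k) S) (A B : Ik3 k) :
    (M * L23 x) A B = ∑ m : Fin k, ∑ n : Fin k, M A (B.1, m, n) * x (m, n) (B.2.1, B.2.2) := by
  rw [Matrix.mul_apply, Fintype.sum_prod_type, Finset.sum_comm, Fintype.sum_prod_type]
  refine Finset.sum_congr rfl fun m _ => ?_
  refine Finset.sum_congr rfl fun n _ => ?_
  simp [L23, mul_ite, ite_mul, mul_one, mul_zero, zero_mul, Finset.sum_ite_eq']

end EntryLemmas
noncomputable def AAA (k : ℕ) : Matrix (Ik3 k) (Ik3 k) (Rk k) :=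
  Matrix.of fun A B => X (A.1, B.1) * X (A.2.1, B.2.1) * X (A.2.2, B.2.2)

noncomputable def aR (a : Matrix (σk k) (σk k) ℂ) : Matrix (σk k) (σk k) (Rk k) :=
  a.map C

section Master
variable (a : Matrix (σk k) (σk k) ℂ)

theorem PhiL1 (i j p q s w : Fin k) :
    Dbr a (X (i, j)) (X (p, q) * X (s, w)) =
      (L12 (aR a) * AAA k - AAA k * L12 (aR a) + L13 (aR a) * AAA k - AAA k * L13 (aR a))
        (i, p, s) (j, q, w) := by
  have h1 : X (s, w) * lam a (i, j) (p, q) =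
      (L12 (aR a) * AAA k) (i, p, s) (j, q, w)
        - (AAA k * L12 (aR a)) (i, p, s) (j, q, w) := by
    rw [L12_mul, mul_L12, lam]
    simp only [Finset.mul_sum, ← Finset.sum_sub_distrib]
    refine Finset.sum_congr rfl fun m _ => Finset.sum_congr rfl fun n _ => ?_
    simp only [aR, AAA, Matrix.map_apply, Matrix.of_apply]
    ring
  have h2 : X (p, q) * lam a (i, j) (s, w) =
      (L13 (aR a) * AAA k) (i, p, s) (j, q, w)
        - (AAA k * L13 (aR a)) (i, p, s) (j, q, w) := by
    rw [L13_mul, mul_L13, lam]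
    simp only [Finset.mul_sum, ← Finset.sum_sub_distrib]
    refine Finset.sum_congr rfl fun m _ => Finset.sum_congr rfl fun n _ => ?_
    simp only [aR, AAA, Matrix.map_apply, Matrix.of_apply]
    ring
  rw [Dbr_mul_right, Dbr_X_X, Dbr_X_X, Matrix.sub_apply, Matrix.add_apply, Matrix.sub_apply]
  rw [h1, h2]
  ring

theorem PhiL2 (ha : ∀ x y : σk k, a (x.2, x.1) (y.2, y.1) = -a x y) (i j p q s w : Fin k) :
    Dbr a (X (p, q)) (X (i, j) * X (s, w)) =
      ((L23 (aR a) - L12 (aR a)) * AAA k - AAA k * (L23 (aR a) - L12 (aR a)))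
        (i, p, s) (j, q, w) := by
  have h1 : X (i, j) * lam a (p, q) (s, w) =
      (L23 (aR a) * AAA k) (i, p, s) (j, q, w)
        - (AAA k * L23 (aR a)) (i, p, s) (j, q, w) := by
    rw [L23_mul, mul_L23, lam]
    simp only [Finset.mul_sum, ← Finset.sum_sub_distrib]
    refine Finset.sum_congr rfl fun m _ => Finset.sum_congr rfl fun n _ => ?_
    simp only [aR, AAA, Matrix.map_apply, Matrix.of_apply]
    ring
  have h2 : X (s, w) * lam a (p, q) (i, j) =
      (AAA k * L12 (aR a)) (i, p, s) (j, q, w)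
        - (L12 (aR a) * AAA k) (i, p, s) (j, q, w) := by
    rw [L12_mul, mul_L12, lam]
    simp only [Finset.mul_sum, ← Finset.sum_sub_distrib]
    rw [Finset.sum_comm]
    refine Finset.sum_congr rfl fun m _ => Finset.sum_congr rfl fun n _ => ?_
    have e1 := ha (i, p) (m, n)
    have e2 := ha (m, n) (j, q)
    simp only at e1 e2
    simp only [aR, AAA, Matrix.map_apply, Matrix.of_apply, e1, e2, map_neg]
    ring
  rw [Dbr_mul_right, Dbr_X_X, Dbr_X_X, Matrix.sub_apply, Matrix.sub_mul, Matrix.mul_sub,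
    Matrix.sub_apply, Matrix.sub_apply]
  rw [h1, h2]
  ring

theorem PhiL3 (ha : ∀ x y : σk k, a (x.2, x.1) (y.2, y.1) = -a x y) (i j p q s w : Fin k) :
    Dbr a (X (s, w)) (X (i, j) * X (p, q)) =
      ((-L13 (aR a) - L23 (aR a)) * AAA k - AAA k * (-L13 (aR a) - L23 (aR a)))
        (i, p, s) (j, q, w) := by
  have h1 : X (i, j) * lam a (s, w) (p, q) =
      (AAA k * L23 (aR a)) (i, p, s) (j, q, w)
        - (L23 (aR a) * AAA k) (i, p, s) (j, q, w) := by
    rw [L23_mul, mul_L23, lam]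
    simp only [Finset.mul_sum, ← Finset.sum_sub_distrib]
    rw [Finset.sum_comm]
    refine Finset.sum_congr rfl fun m _ => Finset.sum_congr rfl fun n _ => ?_
    have e1 := ha (p, s) (m, n)
    have e2 := ha (m, n) (q, w)
    simp only at e1 e2
    simp only [aR, AAA, Matrix.map_apply, Matrix.of_apply, e1, e2, map_neg]
    ring
  have h2 : X (p, q) * lam a (s, w) (i, j) =
      (AAA k * L13 (aR a)) (i, p, s) (j, q, w)
        - (L13 (aR a) * AAA k) (i, p, s) (j, q, w) := by
    rw [L13_mul, mul_L13, lam]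
    simp only [Finset.mul_sum, ← Finset.sum_sub_distrib]
    rw [Finset.sum_comm]
    refine Finset.sum_congr rfl fun m _ => Finset.sum_congr rfl fun n _ => ?_
    have e1 := ha (i, s) (m, n)
    have e2 := ha (m, n) (j, w)
    simp only at e1 e2
    simp only [aR, AAA, Matrix.map_apply, Matrix.of_apply, e1, e2, map_neg]
    ring
  rw [Dbr_mul_right, Dbr_X_X, Dbr_X_X, Matrix.sub_apply, Matrix.sub_mul, Matrix.mul_sub,
    Matrix.sub_apply, Matrix.sub_apply, Matrix.neg_mul, Matrix.mul_neg,
    Matrix.neg_apply, Matrix.neg_apply]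
  rw [h1, h2]
  ring

end Master
noncomputable def PhiE (a : Matrix (σk k) (σk k) ℂ) : Matrix (Ik3 k) (Ik3 k) (Rk k) :=
  L12 (aR a) * AAA k - AAA k * L12 (aR a) + L13 (aR a) * AAA k - AAA k * L13 (aR a)

noncomputable def PsiE (a : Matrix (σk k) (σk k) ℂ) : Matrix (Ik3 k) (Ik3 k) (Rk k) :=
  (L23 (aR a) - L12 (aR a)) * AAA k - AAA k * (L23 (aR a) - L12 (aR a))

noncomputable def ThetaE (a : Matrix (σk k) (σk k) ℂ) : Matrix (Ik3 k) (Ik3 k) (Rk k) :=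
  (-L13 (aR a) - L23 (aR a)) * AAA k - AAA k * (-L13 (aR a) - L23 (aR a))

noncomputable def YE (a : Matrix (σk k) (σk k) ℂ) : Matrix (Ik3 k) (Ik3 k) (Rk k) :=
  L12 (aR a) * L13 (aR a) - L13 (aR a) * L12 (aR a)
    + (L12 (aR a) * L23 (aR a) - L23 (aR a) * L12 (aR a))
    + (L13 (aR a) * L23 (aR a) - L23 (aR a) * L13 (aR a))

section TLems
variable (a : Matrix (σk k) (σk k) ℂ)

theorem PhiL1' (i j p q s w : Fin k) :
    Dbr a (X (i, j)) (X (p, q) * X (s, w)) = PhiE a (i, p, s) (j, q, w) := by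
  unfold PhiE; exact PhiL1 a i j p q s w

theorem PhiL2' (ha : ∀ x y : σk k, a (x.2, x.1) (y.2, y.1) = -a x y) (i j p q s w : Fin k) :
    Dbr a (X (p, q)) (X (i, j) * X (s, w)) = PsiE a (i, p, s) (j, q, w) := by
  unfold PsiE; exact PhiL2 a ha i j p q s w

theorem PhiL3' (ha : ∀ x y : σk k, a (x.2, x.1) (y.2, y.1) = -a x y) (i j p q s w : Fin k) :
    Dbr a (X (s, w)) (X (i, j) * X (p, q)) = ThetaE a (i, p, s) (j, q, w) := by
  unfold ThetaE; exact PhiL3 a ha i j p q s w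

theorem T1L (i j p q s t : Fin k) :
    Dbr a (X (i, j)) (Dbr a (X (p, q)) (X (s, t))) =
      (L23 (aR a) * PhiE a - PhiE a * L23 (aR a)) (i, p, s) (j, q, t) := by
  rw [Dbr_X_X a (p, q) (s, t), lam, Dbr_sum_right, Matrix.sub_apply, L23_mul, mul_L23,
    ← Finset.sum_sub_distrib]
  refine Finset.sum_congr rfl fun m _ => ?_
  rw [Dbr_sum_right, ← Finset.sum_sub_distrib]
  refine Finset.sum_congr rfl fun n _ => ?_
  rw [Dbr_sub_right, Dbr_C_mul_right, Dbr_C_mul_right, PhiL1', PhiL1']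
  simp only [aR, Matrix.map_apply]
  ring

theorem T2L (ha : ∀ x y : σk k, a (x.2, x.1) (y.2, y.1) = -a x y) (i j p q s t : Fin k) :
    Dbr a (X (p, q)) (Dbr a (X (s, t)) (X (i, j))) =
      (L13 (flip21 (aR a)) * PsiE a - PsiE a * L13 (flip21 (aR a))) (i, p, s) (j, q, t) := by
  have lamalt : lam a (s, t) (i, j) = ∑ m : Fin k, ∑ n : Fin k,
      (C (a (s, i) (m, n)) * (X (n, j) * X (m, t))
        - C (a (m, n) (t, j)) * (X (i, n) * X (s, m))) := by
    rw [lam]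
    refine Finset.sum_congr rfl fun m _ => Finset.sum_congr rfl fun n _ => ?_
    ring
  rw [Dbr_X_X a (s, t) (i, j), lamalt, Dbr_sum_right, Matrix.sub_apply, L13_mul, mul_L13]
  simp only [← Finset.sum_sub_distrib]
  conv_rhs => rw [Finset.sum_comm]
  refine Finset.sum_congr rfl fun m _ => ?_
  rw [Dbr_sum_right]
  refine Finset.sum_congr rfl fun n _ => ?_
  rw [Dbr_sub_right, Dbr_C_mul_right, Dbr_C_mul_right, PhiL2' a ha, PhiL2' a ha]
  simp only [flip21, aR, Matrix.map_apply, Matrix.of_apply]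
  ring

theorem T3L (ha : ∀ x y : σk k, a (x.2, x.1) (y.2, y.1) = -a x y) (i j p q s t : Fin k) :
    Dbr a (X (s, t)) (Dbr a (X (i, j)) (X (p, q))) =
      (L12 (aR a) * ThetaE a - ThetaE a * L12 (aR a)) (i, p, s) (j, q, t) := by
  rw [Dbr_X_X a (i, j) (p, q), lam, Dbr_sum_right, Matrix.sub_apply, L12_mul, mul_L12,
    ← Finset.sum_sub_distrib]
  refine Finset.sum_congr rfl fun m _ => ?_
  rw [Dbr_sum_right, ← Finset.sum_sub_distrib]
  refine Finset.sum_congr rfl fun n _ => ?_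
  rw [Dbr_sub_right, Dbr_C_mul_right, Dbr_C_mul_right, PhiL3' a ha, PhiL3' a ha]
  simp only [aR, Matrix.map_apply]
  ring

theorem flipaR (ha : ∀ x y : σk k, a (x.2, x.1) (y.2, y.1) = -a x y) :
    flip21 (aR a) = -(aR a) := by
  refine Matrix.ext fun x y => ?_
  simp only [flip21, aR, Matrix.map_apply, Matrix.of_apply, Matrix.neg_apply, ha x y, map_neg]

theorem L13_neg (x : Matrix (σk k) (σk k) (Rk k)) : L13 (-x) = -(L13 x) := by
  refine Matrix.ext fun A B => ?_
  simp only [L13, Matrix.neg_apply, Matrix.of_apply]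
  ring

theorem Jgen (ha : ∀ x y : σk k, a (x.2, x.1) (y.2, y.1) = -a x y)
    (hY : YE a * AAA k = AAA k * YE a) :
    ∀ u v w : σk k, Jac a (X u) (X v) (X w) = 0 := by
  rintro ⟨i, j⟩ ⟨p, q⟩ ⟨s, t⟩
  rw [Jac, T1L, T2L a ha, T3L a ha, flipaR a ha, L13_neg]
  have key : L23 (aR a) * PhiE a - PhiE a * L23 (aR a)
      + (-L13 (aR a) * PsiE a - PsiE a * -L13 (aR a))
      + (L12 (aR a) * ThetaE a - ThetaE a * L12 (aR a)) = 0 := by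
    have h2 : L23 (aR a) * PhiE a - PhiE a * L23 (aR a)
        + (-L13 (aR a) * PsiE a - PsiE a * -L13 (aR a))
        + (L12 (aR a) * ThetaE a - ThetaE a * L12 (aR a))
        = AAA k * YE a - YE a * AAA k := by
      unfold PhiE PsiE ThetaE YE
      noncomm_ring
    rw [h2, hY, sub_self]
  have hent := congrFun (congrFun key (i, p, s)) (j, q, t)
  simpa [Matrix.add_apply, Matrix.sub_apply] using hent

end TLems
section Rels
variable {S : Type*} [CommRing S]

theorem flip_tE : flip21 (tE k (S := S)) = tE k := by
  refine Matrix.ext fun x y => ?_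
  simp only [flip21, tE, Matrix.of_apply]
  ring

theorem flip21_flip21 (x : Matrix (σk k) (σk k) S) : flip21 (flip21 x) = x := rfl

theorem L12_sub (x y : Matrix (σk k) (σk k) S) : L12 (x - y) = L12 x - L12 y := by
  refine Matrix.ext fun A B => ?_
  simp only [L12, Matrix.sub_apply, Matrix.of_apply]
  ring

theorem L23_sub (x y : Matrix (σk k) (σk k) S) : L23 (x - y) = L23 x - L23 y := by
  refine Matrix.ext fun A B => ?_
  simp only [L23, Matrix.sub_apply, Matrix.of_apply]
  ring

theorem T12_mul (M : Matrix (Ik3 k) (Ik3 k) S) :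
    L12 (tE k) * M = Matrix.of fun A B => M (A.2.1, A.1, A.2.2) B := by
  refine Matrix.ext fun A B => ?_
  rw [Matrix.of_apply, Matrix.mul_apply, Finset.sum_eq_single (A.2.1, A.1, A.2.2)]
  · simp [L12, tE]
  · rintro ⟨b1, b2, b3⟩ - hb
    simp only [L12, tE, Matrix.of_apply]
    split_ifs with h1 h2 h3 <;> simp_all
  · intro h; exact absurd (Finset.mem_univ _) h

theorem mul_T12 (M : Matrix (Ik3 k) (Ik3 k) S) :
    M * L12 (tE k) = Matrix.of fun A B => M A (B.2.1, B.1, B.2.2) := by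
  refine Matrix.ext fun A B => ?_
  rw [Matrix.of_apply, Matrix.mul_apply, Finset.sum_eq_single (B.2.1, B.1, B.2.2)]
  · simp [L12, tE]
  · rintro ⟨b1, b2, b3⟩ - hb
    simp only [L12, tE, Matrix.of_apply]
    split_ifs with h1 h2 h3 <;> simp_all
  · intro h; exact absurd (Finset.mem_univ _) h

theorem T13_mul (M : Matrix (Ik3 k) (Ik3 k) S) :
    L13 (tE k) * M = Matrix.of fun A B => M (A.2.2, A.2.1, A.1) B := by
  refine Matrix.ext fun A B => ?_
  rw [Matrix.of_apply, Matrix.mul_apply, Finset.sum_eq_single (A.2.2, A.2.1, A.1)]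
  · simp [L13, tE]
  · rintro ⟨b1, b2, b3⟩ - hb
    simp only [L13, tE, Matrix.of_apply]
    split_ifs with h1 h2 h3 <;> simp_all
  · intro h; exact absurd (Finset.mem_univ _) h

theorem mul_T13 (M : Matrix (Ik3 k) (Ik3 k) S) :
    M * L13 (tE k) = Matrix.of fun A B => M A (B.2.2, B.2.1, B.1) := by
  refine Matrix.ext fun A B => ?_
  rw [Matrix.of_apply, Matrix.mul_apply, Finset.sum_eq_single (B.2.2, B.2.1, B.1)]
  · simp [L13, tE]
  · rintro ⟨b1, b2, b3⟩ - hb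
    simp only [L13, tE, Matrix.of_apply]
    split_ifs with h1 h2 h3 <;> simp_all
  · intro h; exact absurd (Finset.mem_univ _) h

theorem T23_mul (M : Matrix (Ik3 k) (Ik3 k) S) :
    L23 (tE k) * M = Matrix.of fun A B => M (A.1, A.2.2, A.2.1) B := by
  refine Matrix.ext fun A B => ?_
  rw [Matrix.of_apply, Matrix.mul_apply, Finset.sum_eq_single (A.1, A.2.2, A.2.1)]
  · simp [L23, tE]
  · rintro ⟨b1, b2, b3⟩ - hb
    simp only [L23, tE, Matrix.of_apply]
    split_ifs with h1 h2 h3 <;> simp_all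
  · intro h; exact absurd (Finset.mem_univ _) h

theorem mul_T23 (M : Matrix (Ik3 k) (Ik3 k) S) :
    M * L23 (tE k) = Matrix.of fun A B => M A (B.1, B.2.2, B.2.1) := by
  refine Matrix.ext fun A B => ?_
  rw [Matrix.of_apply, Matrix.mul_apply, Finset.sum_eq_single (B.1, B.2.2, B.2.1)]
  · simp [L23, tE]
  · rintro ⟨b1, b2, b3⟩ - hb
    simp only [L23, tE, Matrix.of_apply]
    split_ifs with h1 h2 h3 <;> simp_all
  · intro h; exact absurd (Finset.mem_univ _) h

theorem rel1 (x : Matrix (σk k) (σk k) S) : L12 (tE k) * L13 x = L23 x * L12 (tE k) := by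
  rw [T12_mul, mul_T12]
  try refine Matrix.ext fun A B => ?_
  try simp only [L13, L23, Matrix.of_apply]
  try ring

theorem rel2 (x : Matrix (σk k) (σk k) S) : L12 (tE k) * L23 x = L13 x * L12 (tE k) := by
  rw [T12_mul, mul_T12]
  try refine Matrix.ext fun A B => ?_
  try simp only [L13, L23, Matrix.of_apply]
  try ring

theorem rel3 (x : Matrix (σk k) (σk k) S) : L23 (tE k) * L12 x = L13 x * L23 (tE k) := by
  rw [T23_mul, mul_T23]
  try refine Matrix.ext fun A B => ?_
  try simp only [L12, L13, Matrix.of_apply]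
  try ring

theorem rel4 (x : Matrix (σk k) (σk k) S) : L23 (tE k) * L13 x = L12 x * L23 (tE k) := by
  rw [T23_mul, mul_T23]
  try refine Matrix.ext fun A B => ?_
  try simp only [L12, L13, Matrix.of_apply]
  try ring

theorem rel5 (x : Matrix (σk k) (σk k) S) : L12 x * L13 (tE k) = L13 (tE k) * L23 (flip21 x) := by
  rw [T13_mul, mul_T13]
  try refine Matrix.ext fun A B => ?_
  try simp only [L12, L23, flip21, Matrix.of_apply]
  try ring

theorem rel6 (x : Matrix (σk k) (σk k) S) : L23 x * L13 (tE k) = L13 (tE k) * L12 (flip21 x) := by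
  rw [T13_mul, mul_T13]
  try refine Matrix.ext fun A B => ?_
  try simp only [L12, L23, flip21, Matrix.of_apply]
  try ring

theorem tt1 : L12 (tE k (S := S)) * L13 (tE k) = L13 (tE k) * L23 (tE k) := by
  rw [rel5, flip_tE]

theorem tt2 : L13 (tE k (S := S)) * L12 (tE k) = L23 (tE k) * L13 (tE k) := by
  rw [rel6, flip_tE]

theorem tt3 : L12 (tE k (S := S)) * L23 (tE k) = L13 (tE k) * L12 (tE k) := by
  exact rel2 (tE k)

theorem tt4 : L23 (tE k (S := S)) * L12 (tE k) = L13 (tE k) * L23 (tE k) := by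
  exact rel3 (tE k)

end Rels

theorem wA1 : (L13 (tE k) * L23 (tE k)) * AAA k = AAA k * (L13 (tE k) * L23 (tE k)) := by
  rw [Matrix.mul_assoc, T13_mul, T23_mul, ← Matrix.mul_assoc, mul_T13]
  have : (Matrix.of fun (A B : Ik3 k) => AAA k A (B.2.2, B.2.1, B.1)) * L23 (tE k)
      = Matrix.of fun A B => AAA k A ((B.1, B.2.2, B.2.1).2.2, (B.1, B.2.2, B.2.1).2.1,
          (B.1, B.2.2, B.2.1).1) := by
    rw [mul_T23]
    rfl
  rw [this]
  refine Matrix.ext fun A B => ?_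
  simp only [AAA, Matrix.of_apply]
  ring

theorem wA2 : (L23 (tE k) * L13 (tE k)) * AAA k = AAA k * (L23 (tE k) * L13 (tE k)) := by
  rw [Matrix.mul_assoc, T23_mul, T13_mul, ← Matrix.mul_assoc, mul_T23]
  have : (Matrix.of fun (A B : Ik3 k) => AAA k A (B.1, B.2.2, B.2.1)) * L13 (tE k)
      = Matrix.of fun A B => AAA k A ((B.2.2, B.2.1, B.1).1, (B.2.2, B.2.1, B.1).2.2,
          (B.2.2, B.2.1, B.1).2.1) := by
    rw [mul_T13]
    rfl
  rw [this]
  refine Matrix.ext fun A B => ?_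
  simp only [AAA, Matrix.of_apply]
  ring
noncomputable def CRH (k : ℕ) : ℂ →+* Rk k := MvPolynomial.C

theorem tCas_eq : tCas k = (tE k : Matrix (σk k) (σk k) ℂ) := by
  refine Matrix.ext fun x y => ?_
  simp only [tCas, Matrix.sum_apply]
  rw [Finset.sum_eq_single x.1]
  · rw [Finset.sum_eq_single y.1]
    · simp only [Matrix.kroneckerMap_apply, Matrix.single, Matrix.of_apply, tE]
      split_ifs <;> simp_all
    · rintro b - hb
      simp [Matrix.kroneckerMap_apply, Matrix.single, hb]
    · intro h; exact absurd (Finset.mem_univ _) h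
  · rintro b - hb
    simp [Matrix.kroneckerMap_apply, Matrix.single, hb]
  · intro h; exact absurd (Finset.mem_univ _) h

theorem tE_map : (tE k : Matrix (σk k) (σk k) ℂ).map (CRH k) = tE k := by
  refine Matrix.ext fun x y => ?_
  simp only [tE, Matrix.map_apply, Matrix.of_apply]
  split_ifs <;> simp [CRH]

theorem flip21_map (r : Matrix (σk k) (σk k) ℂ) :
    (flip21 r).map (CRH k) = flip21 (r.map (CRH k)) := rfl

theorem lift12_map (r : Matrix (σk k) (σk k) ℂ) :
    (lift12 r).map (CRH k) = L12 (r.map (CRH k)) := by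
  refine Matrix.ext fun A B => ?_
  simp only [lift12, L12, Matrix.map_apply, Matrix.of_apply, mul_ite, mul_one, mul_zero, ite_mul, one_mul, zero_mul]
  split_ifs <;> simp [CRH]

theorem lift13_map (r : Matrix (σk k) (σk k) ℂ) :
    (lift13 r).map (CRH k) = L13 (r.map (CRH k)) := by
  refine Matrix.ext fun A B => ?_
  simp only [lift13, L13, Matrix.map_apply, Matrix.of_apply, mul_ite, mul_one, mul_zero, ite_mul, one_mul, zero_mul]
  split_ifs <;> simp [CRH]

theorem lift23_map (r : Matrix (σk k) (σk k) ℂ) :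
    (lift23 r).map (CRH k) = L23 (r.map (CRH k)) := by
  refine Matrix.ext fun A B => ?_
  simp only [lift23, L23, Matrix.map_apply, Matrix.of_apply, mul_ite, mul_one, mul_zero, ite_mul, one_mul, zero_mul]
  split_ifs <;> simp [CRH]

theorem mmap_add {m : Type*} (M N : Matrix m m ℂ) :
    (M + N).map (CRH k) = M.map (CRH k) + N.map (CRH k) := by
  refine Matrix.ext fun A B => ?_
  simp [Matrix.map_apply]

theorem mmap_sub {m : Type*} (M N : Matrix m m ℂ) :
    (M - N).map (CRH k) = M.map (CRH k) - N.map (CRH k) := by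
  refine Matrix.ext fun A B => ?_
  simp [Matrix.map_apply]

theorem L12_add (x y : Matrix (σk k) (σk k) (Rk k)) : L12 (x + y) = L12 x + L12 y := by
  refine Matrix.ext fun A B => ?_
  simp only [L12, Matrix.add_apply, Matrix.of_apply]
  ring

theorem L13_add (x y : Matrix (σk k) (σk k) (Rk k)) : L13 (x + y) = L13 x + L13 y := by
  refine Matrix.ext fun A B => ?_
  simp only [L13, Matrix.add_apply, Matrix.of_apply]
  ring

theorem L23_add (x y : Matrix (σk k) (σk k) (Rk k)) : L23 (x + y) = L23 x + L23 y := by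
  refine Matrix.ext fun A B => ?_
  simp only [L23, Matrix.add_apply, Matrix.of_apply]
  ring

theorem L13_sub (x y : Matrix (σk k) (σk k) (Rk k)) : L13 (x - y) = L13 x - L13 y := by
  refine Matrix.ext fun A B => ?_
  simp only [L13, Matrix.sub_apply, Matrix.of_apply]
  ring

theorem L12_smul (c : ℂ) (x : Matrix (σk k) (σk k) (Rk k)) : L12 (c • x) = c • L12 x := by
  refine Matrix.ext fun A B => ?_
  simp only [L12, Matrix.smul_apply, Matrix.of_apply, smul_mul_assoc]

theorem L13_smul (c : ℂ) (x : Matrix (σk k) (σk k) (Rk k)) : L13 (c • x) = c • L13 x := by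
  refine Matrix.ext fun A B => ?_
  simp only [L13, Matrix.smul_apply, Matrix.of_apply, smul_mul_assoc]

theorem L23_smul (c : ℂ) (x : Matrix (σk k) (σk k) (Rk k)) : L23 (c • x) = c • L23 x := by
  refine Matrix.ext fun A B => ?_
  simp only [L23, Matrix.smul_apply, Matrix.of_apply, mul_smul_comm]

section YComm

variable (r : Matrix (σk k) (σk k) ℂ)

set_option maxHeartbeats 2000000 in
theorem Ycomm
    (hCYB : (lift12 r * lift13 r - lift13 r * lift12 r)
        + (lift12 r * lift23 r - lift23 r * lift12 r)
        + (lift13 r * lift23 r - lift23 r * lift13 r) = 0)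
    (hsym : r + flip21 r = tCas k) :
    YE ((1 / 2 : ℂ) • (r - flip21 r)) * AAA k = AAA k * YE ((1 / 2 : ℂ) • (r - flip21 r)) := by
  set a : Matrix (σk k) (σk k) ℂ := (1 / 2 : ℂ) • (r - flip21 r) with ha_def
  set rR : Matrix (σk k) (σk k) (Rk k) := r.map (CRH k) with hrR
  -- mapped symmetry
  have hflipC : flip21 r = tCas k - r := eq_sub_of_add_eq' hsym
  have hflipr : flip21 rR = tE k - rR := by
    rw [hrR, ← flip21_map, hflipC, mmap_sub, tCas_eq, tE_map]
  -- mapped CYBE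
  have hcybR : L12 rR * L13 rR - L13 rR * L12 rR + (L12 rR * L23 rR - L23 rR * L12 rR)
      + (L13 rR * L23 rR - L23 rR * L13 rR) = 0 := by
    have h0 : ((lift12 r * lift13 r - lift13 r * lift12 r)
        + (lift12 r * lift23 r - lift23 r * lift12 r)
        + (lift13 r * lift23 r - lift23 r * lift13 r)).map (CRH k)
        = (0 : Matrix (Ik3 k) (Ik3 k) ℂ).map (CRH k) := by rw [hCYB]
    rw [mmap_add, mmap_add, mmap_sub, mmap_sub, mmap_sub] at h0
    simp only [Matrix.map_mul, lift12_map, lift13_map, lift23_map] at h0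
    have hz : (0 : Matrix (Ik3 k) (Ik3 k) ℂ).map (CRH k) = 0 := by
      refine Matrix.ext fun A B => ?_
      simp [Matrix.map_apply]
    rw [hz] at h0
    rw [← hrR] at h0
    exact h0
  -- aR in terms of rR and tE
  have hfc : ∀ x y : σk k, r (x.2, x.1) (y.2, y.1) = tCas k x y - r x y := by
    intro x y
    have h := congrFun (congrFun hflipC x) y
    simpa [flip21, Matrix.sub_apply] using h
  have aR_eq : aR a = (1 / 2 : ℂ) • (rR + rR - tE k) := by
    refine Matrix.ext fun x y => ?_
    simp only [aR, ha_def, Matrix.map_apply, Matrix.smul_apply, Matrix.sub_apply,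
      Matrix.add_apply, flip21, Matrix.of_apply, smul_eq_mul, hrR]
    rw [hfc x y]
    rw [show tCas k x y = ((if x.1 = y.2 then 1 else 0) * (if x.2 = y.1 then 1 else 0) : ℂ) from
      by rw [tCas_eq]; rfl]
    rw [smul_eq_C_mul]
    simp only [tE, Matrix.of_apply, CRH]
    split_ifs <;> simp [map_ofNat, _root_.map_mul, _root_.map_sub, _root_.map_one, _root_.map_zero] <;> ring
  -- B matrices
  have sm : ∀ M N : Matrix (Ik3 k) (Ik3 k) (Rk k),
      ((1 / 2 : ℂ) • M) * ((1 / 2 : ℂ) • N) = (1 / 4 : ℂ) • (M * N) := by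
    intro M N
    rw [Matrix.smul_mul, Matrix.mul_smul, smul_smul]
    norm_num
  have hB12 : L12 (aR a) = (1 / 2 : ℂ) • (L12 rR + L12 rR - L12 (tE k)) := by
    rw [aR_eq, L12_smul, L12_sub, L12_add]
  have hB13 : L13 (aR a) = (1 / 2 : ℂ) • (L13 rR + L13 rR - L13 (tE k)) := by
    rw [aR_eq, L13_smul, L13_sub, L13_add]
  have hB23 : L23 (aR a) = (1 / 2 : ℂ) • (L23 rR + L23 rR - L23 (tE k)) := by
    rw [aR_eq, L23_smul, L23_sub, L23_add]
  -- cross identities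
  have h1 : L12 (tE k) * L13 rR - L13 rR * L12 (tE k)
      + (L12 (tE k) * L23 rR - L23 rR * L12 (tE k)) = 0 := by
    rw [rel1 rR, rel2 rR]; abel
  have h2 : L12 rR * L23 (tE k) - L23 (tE k) * L12 rR
      + (L13 rR * L23 (tE k) - L23 (tE k) * L13 rR) = 0 := by
    rw [rel3 rR, rel4 rR]; abel
  have g5' : L12 rR * L13 (tE k) = L13 (tE k) * L23 (tE k) - L13 (tE k) * L23 rR := by
    rw [rel5 rR, hflipr, L23_sub, mul_sub]
  have g7' : L13 (tE k) * L12 rR = L23 (tE k) * L13 (tE k) - L23 rR * L13 (tE k) := by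
    have h := rel6 (flip21 rR)
    rw [flip21_flip21] at h
    rw [← h, hflipr, L23_sub, sub_mul]
  have h3 : L12 rR * L13 (tE k) - L13 (tE k) * L12 rR
      + (L13 (tE k) * L23 rR - L23 rR * L13 (tE k))
      = L13 (tE k) * L23 (tE k) - L23 (tE k) * L13 (tE k) := by
    rw [g5', g7']; abel
  have hT : L12 (tE k (S := Rk k)) * L13 (tE k) - L13 (tE k) * L12 (tE k)
      + (L12 (tE k) * L23 (tE k) - L23 (tE k) * L12 (tE k))
      + (L13 (tE k) * L23 (tE k) - L23 (tE k) * L13 (tE k))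
      = L13 (tE k) * L23 (tE k) - L23 (tE k) * L13 (tE k) := by
    rw [tt1, tt3, tt2, tt4]; abel
  have expand : (L12 rR + L12 rR - L12 (tE k)) * (L13 rR + L13 rR - L13 (tE k))
        - (L13 rR + L13 rR - L13 (tE k)) * (L12 rR + L12 rR - L12 (tE k))
      + ((L12 rR + L12 rR - L12 (tE k)) * (L23 rR + L23 rR - L23 (tE k))
        - (L23 rR + L23 rR - L23 (tE k)) * (L12 rR + L12 rR - L12 (tE k)))
      + ((L13 rR + L13 rR - L13 (tE k)) * (L23 rR + L23 rR - L23 (tE k))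
        - (L23 rR + L23 rR - L23 (tE k)) * (L13 rR + L13 rR - L13 (tE k)))
      = ((L12 rR * L13 rR - L13 rR * L12 rR + (L12 rR * L23 rR - L23 rR * L12 rR)
            + (L13 rR * L23 rR - L23 rR * L13 rR))
          + (L12 rR * L13 rR - L13 rR * L12 rR + (L12 rR * L23 rR - L23 rR * L12 rR)
            + (L13 rR * L23 rR - L23 rR * L13 rR))
          + (L12 rR * L13 rR - L13 rR * L12 rR + (L12 rR * L23 rR - L23 rR * L12 rR)
            + (L13 rR * L23 rR - L23 rR * L13 rR))
          + (L12 rR * L13 rR - L13 rR * L12 rR + (L12 rR * L23 rR - L23 rR * L12 rR)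
            + (L13 rR * L23 rR - L23 rR * L13 rR)))
        - (((L12 (tE k) * L13 rR - L13 rR * L12 (tE k)
              + (L12 (tE k) * L23 rR - L23 rR * L12 (tE k)))
            + (L12 (tE k) * L13 rR - L13 rR * L12 (tE k)
              + (L12 (tE k) * L23 rR - L23 rR * L12 (tE k))))
          + ((L12 rR * L23 (tE k) - L23 (tE k) * L12 rR
              + (L13 rR * L23 (tE k) - L23 (tE k) * L13 rR))
            + (L12 rR * L23 (tE k) - L23 (tE k) * L12 rR
              + (L13 rR * L23 (tE k) - L23 (tE k) * L13 rR)))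
          + ((L12 rR * L13 (tE k) - L13 (tE k) * L12 rR
              + (L13 (tE k) * L23 rR - L23 rR * L13 (tE k)))
            + (L12 rR * L13 (tE k) - L13 (tE k) * L12 rR
              + (L13 (tE k) * L23 rR - L23 rR * L13 (tE k)))))
        + (L12 (tE k) * L13 (tE k) - L13 (tE k) * L12 (tE k)
          + (L12 (tE k) * L23 (tE k) - L23 (tE k) * L12 (tE k))
          + (L13 (tE k) * L23 (tE k) - L23 (tE k) * L13 (tE k))) := by
    noncomm_ring
  have YU : (L12 rR + L12 rR - L12 (tE k)) * (L13 rR + L13 rR - L13 (tE k))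
        - (L13 rR + L13 rR - L13 (tE k)) * (L12 rR + L12 rR - L12 (tE k))
      + ((L12 rR + L12 rR - L12 (tE k)) * (L23 rR + L23 rR - L23 (tE k))
        - (L23 rR + L23 rR - L23 (tE k)) * (L12 rR + L12 rR - L12 (tE k)))
      + ((L13 rR + L13 rR - L13 (tE k)) * (L23 rR + L23 rR - L23 (tE k))
        - (L23 rR + L23 rR - L23 (tE k)) * (L13 rR + L13 rR - L13 (tE k)))
      = L23 (tE k) * L13 (tE k) - L13 (tE k) * L23 (tE k) := by
    rw [expand, hcybR, h1, h2, h3, hT]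
    abel
  have Ylem : YE a = (1 / 4 : ℂ) • (L23 (tE k) * L13 (tE k) - L13 (tE k) * L23 (tE k)) := by
    rw [YE, hB12, hB13, hB23, sm, sm, sm, sm, sm, sm]
    rw [← smul_sub, ← smul_sub, ← smul_sub, ← smul_add, ← smul_add]
    rw [YU]
  rw [Ylem, Matrix.smul_mul, Matrix.mul_smul]
  rw [Matrix.sub_mul, Matrix.mul_sub, wA2, wA1]

end YComm

/-- For any classical r-matrix `r` (satisfying the CYBE with symmetric part the split Casimir),
there is a Poisson bracket (a bracket satisfying the Jacobi identity) on the polynomial algebra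
in the entries of a matrix `A` of indeterminates whose values on generators are the Sklyanin
relation `{A ⊗, A} = [r_a, A ⊗ A]`: the Poisson–Lie structure on `GL k`. -/
theorem exists_sklyanin_poisson_bracket (k : ℕ)
    (r : Matrix (Fin k × Fin k) (Fin k × Fin k) ℂ)
    (hCYB : (lift12 r * lift13 r - lift13 r * lift12 r)
        + (lift12 r * lift23 r - lift23 r * lift12 r)
        + (lift13 r * lift23 r - lift23 r * lift13 r) = 0)
    (hsym : r + flip21 r = tCas k) :
    ∃ D : MvPolynomial (Fin k × Fin k) ℂ → MvPolynomial (Fin k × Fin k) ℂ →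
        MvPolynomial (Fin k × Fin k) ℂ,
      IsBracket (MvPolynomial (Fin k × Fin k) ℂ) D
      ∧ (∀ f g h : MvPolynomial (Fin k × Fin k) ℂ,
          D f (D g h) + D g (D h f) + D h (D f g) = 0)
      ∧ bmat D (Matrix.of fun i j : Fin k => MvPolynomial.X (i, j))
            (Matrix.of fun i j : Fin k => MvPolynomial.X (i, j))
          = (((1 / 2 : ℂ) • (r - flip21 r)).map
                (algebraMap ℂ (MvPolynomial (Fin k × Fin k) ℂ)))
              * ((Matrix.of fun i j : Fin k => MvPolynomial.X (i, j)) ⊗ₖ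
                  (Matrix.of fun i j : Fin k => MvPolynomial.X (i, j)))
            - ((Matrix.of fun i j : Fin k => MvPolynomial.X (i, j)) ⊗ₖ
                  (Matrix.of fun i j : Fin k => MvPolynomial.X (i, j)))
              * (((1 / 2 : ℂ) • (r - flip21 r)).map
                  (algebraMap ℂ (MvPolynomial (Fin k × Fin k) ℂ))) := by
  have ha : ∀ x y : σk k, ((1 / 2 : ℂ) • (r - flip21 r)) (x.2, x.1) (y.2, y.1)
      = -((1 / 2 : ℂ) • (r - flip21 r)) x y := by
    intro x y
    simp only [Matrix.smul_apply, Matrix.sub_apply, flip21, Matrix.of_apply, smul_eq_mul]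
    ring
  refine ⟨Dbr ((1 / 2 : ℂ) • (r - flip21 r)),
    ⟨Dbr_add_left _, Dbr_smul_left _, Dbr_antisymm _ ha, Dbr_mul_left _⟩, ?_, ?_⟩
  · intro f g h
    exact Jac_zero _ ha (Jgen _ ha (Ycomm r hCYB hsym)) f g h
  · refine Matrix.ext fun x y => ?_
    obtain ⟨i, p⟩ := x
    obtain ⟨j, q⟩ := y
    show Dbr ((1 / 2 : ℂ) • (r - flip21 r)) (X (i, j)) (X (p, q)) = _
    rw [Dbr_X_X, lam, Matrix.sub_apply, Matrix.mul_apply, Matrix.mul_apply,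
      Fintype.sum_prod_type, Fintype.sum_prod_type]
    rw [← Finset.sum_sub_distrib]
    refine Finset.sum_congr rfl fun m _ => ?_
    rw [← Finset.sum_sub_distrib]
    refine Finset.sum_congr rfl fun n _ => ?_
    simp only [Matrix.map_apply, Matrix.kroneckerMap_apply, Matrix.of_apply,
      MvPolynomial.algebraMap_eq]
    ring
end
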